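/- arXiv:2010.08467 — 11 statements merged into one kernel-verified Lean document; each statement's English description precedes it below -/
import Mathlib

section
/- Assume in addition that ⟨Λ_j, Λ_k⟩ ≥ 0 for all 1 ≤ j, k ≤ ℓ. Then for every 1 ≤ j ≤ ℓ and every λ ∈ 𝔖_j one has ⟨Λ_j, λ⟩ ≥ (1/ℓ)·‖Λ_j‖². -/
open RealInnerProductSpace

/-- Assume `⟨Λ_j, Λ_k⟩ ≥ 0` for all `j, k`. Then for every `j` and every
`λ ∈ 𝔖_j` one has `⟨Λ_j, λ⟩ ≥ (1/ℓ)·‖Λ_j‖²`. -/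
theorem stmt2 {V : Type*} [NormedAddCommGroup V] [InnerProductSpace ℝ V]
    [FiniteDimensional ℝ V] {ℓ : ℕ} (hℓ : 1 ≤ ℓ)
    (α : Module.Basis (Fin ℓ) ℝ V) (Λ : Fin ℓ → V)
    (hdual : ∀ j k : Fin ℓ, ⟪α j, Λ k⟫ = if j = k then 1 else 0)
    (hΛpos : ∀ j k : Fin ℓ, 0 ≤ ⟪Λ j, Λ k⟫)
    (j : Fin ℓ) (lam : V)
    (h1 : ∀ k, 0 ≤ ⟪α k, lam⟫) (h2 : (∑ k, ⟪α k, lam⟫) = 1)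
    (h3 : ∀ k, ⟪α k, lam⟫ ≤ ⟪α j, lam⟫) :
    (1 / (ℓ : ℝ)) * ‖Λ j‖ ^ 2 ≤ ⟪Λ j, lam⟫ := by
  -- λ = ∑ ⟪α k, lam⟫ • Λ k
  have key : lam = ∑ k, ⟪α k, lam⟫ • Λ k := by
    have hzero : ∀ i : Fin ℓ, ⟪α i, lam - ∑ k, ⟪α k, lam⟫ • Λ k⟫ = 0 := by
      intro i
      simp only [inner_sub_right, inner_sum, inner_smul_right, hdual,
        mul_ite, mul_one, mul_zero]
      simp
    have hsub : lam - ∑ k, ⟪α k, lam⟫ • Λ k = 0 := by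
      apply ext_inner_left ℝ
      intro y
      rw [← α.sum_repr y]
      rw [sum_inner]
      simp [inner_smul_left, hzero]
    exact sub_eq_zero.mp hsub
  -- ⟪α j, lam⟫ ≥ 1/ℓ
  have hj : 1 / (ℓ : ℝ) ≤ ⟪α j, lam⟫ := by
    have hℓ' : (0 : ℝ) < ℓ := by exact_mod_cast hℓ
    rw [div_le_iff₀ hℓ']
    calc (1 : ℝ) = ∑ k, ⟪α k, lam⟫ := h2.symm
      _ ≤ ∑ _k : Fin ℓ, ⟪α j, lam⟫ := Finset.sum_le_sum fun k _ => h3 k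
      _ = ⟪α j, lam⟫ * ℓ := by simp [mul_comm]
  have hexp : ⟪Λ j, lam⟫ = ∑ k, ⟪α k, lam⟫ * ⟪Λ j, Λ k⟫ := by
    conv_lhs => rw [key]
    simp [inner_sum, inner_smul_right]
  rw [hexp]
  have hterm : ⟪α j, lam⟫ * ⟪Λ j, Λ j⟫ ≤ ∑ k, ⟪α k, lam⟫ * ⟪Λ j, Λ k⟫ := by
    apply Finset.single_le_sum (f := fun k => ⟪α k, lam⟫ * ⟪Λ j, Λ k⟫)
    · exact fun k _ => mul_nonneg (h1 k) (hΛpos j k)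
    · exact Finset.mem_univ j
  have hnorm : ⟪Λ j, Λ j⟫ = ‖Λ j‖ ^ 2 := real_inner_self_eq_norm_sq (Λ j)
  have h0 : (0 : ℝ) ≤ ‖Λ j‖ ^ 2 := sq_nonneg _
  calc (1 / (ℓ : ℝ)) * ‖Λ j‖ ^ 2 ≤ ⟪α j, lam⟫ * ‖Λ j‖ ^ 2 :=
        mul_le_mul_of_nonneg_right hj h0
    _ = ⟪α j, lam⟫ * ⟪Λ j, Λ j⟫ := by rw [hnorm]
    _ ≤ _ := hterm
end

section
/- Suppose c₂ > 0 is a constant such that for every λ ∈ V and every 1 ≤ j ≤ ℓ, if −c₂·‖λ‖ ≤ ⟨α_k, λ⟩ ≤ ⟨α_j, λ⟩ + c₂·‖λ‖ for all k ≠ j then ⟨α_j, λ⟩ ≥ c₂·‖λ‖. Fix 1 ≤ j ≤ ℓ, let α = Σ_{k=1}^ℓ c_k α_k with all c_k nonnegative integers and c_j ≥ 1, and set L₁ := Σ_{k=1}^ℓ c_k. Let c₁ > 0 satisfy L₁·c₁ < c₂ and set c₄ := c₂ − L₁·c₁ > 0. Then for every λ ∈ V satisfying −c₁·‖λ‖ ≤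 ⟨α_k, λ⟩ and ⟨α_k, λ⟩ ≤ ⟨α_j, λ⟩ + c₁·‖λ‖ for all k ≠ j, one has ⟨α, λ⟩ ≥ c₄·‖λ‖. -/
open RealInnerProductSpace

/-- Given the `c₂`-property, fix `j`, let `α = Σ c_k α_k` with the `c_k`
nonnegative integers and `c_j ≥ 1`, `L₁ := Σ c_k`, `c₁ > 0` with `L₁·c₁ < c₂`, and
`c₄ := c₂ − L₁·c₁`. Then for every `λ` satisfying the `c₁`-inequalities one has
`⟨α, λ⟩ ≥ c₄·‖λ‖`. -/
theorem stmt3 {V : Type*} [NormedAddCommGroup V] [InnerProductSpace ℝ V]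
    [FiniteDimensional ℝ V] {ℓ : ℕ} (hℓ : 1 ≤ ℓ)
    (α : Module.Basis (Fin ℓ) ℝ V)
    (c₂ : ℝ) (hc₂ : 0 < c₂)
    (hc₂prop : ∀ (lam : V) (j : Fin ℓ),
      (∀ k : Fin ℓ, k ≠ j →
        -c₂ * ‖lam‖ ≤ ⟪α k, lam⟫ ∧ ⟪α k, lam⟫ ≤ ⟪α j, lam⟫ + c₂ * ‖lam‖) →
      c₂ * ‖lam‖ ≤ ⟪α j, lam⟫)
    (j : Fin ℓ) (c : Fin ℓ → ℕ) (hcj : 1 ≤ c j)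
    (a : V) (ha : a = ∑ k, (c k : ℝ) • (α k))
    (c₁ : ℝ) (hc₁ : 0 < c₁) (hc₁L : (∑ k, (c k : ℝ)) * c₁ < c₂) :
    ∀ lam : V,
      (∀ k : Fin ℓ, k ≠ j →
        -c₁ * ‖lam‖ ≤ ⟪α k, lam⟫ ∧ ⟪α k, lam⟫ ≤ ⟪α j, lam⟫ + c₁ * ‖lam‖) →
      (c₂ - (∑ k, (c k : ℝ)) * c₁) * ‖lam‖ ≤ ⟪a, lam⟫ := by

  intro lam hlam
  have hnn : (0:ℝ) ≤ ‖lam‖ := norm_nonneg lam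
  have hLj : (1:ℝ) ≤ (c j : ℝ) := by exact_mod_cast hcj
  have hL1 : (1:ℝ) ≤ ∑ k, (c k : ℝ) :=
    le_trans hLj (Finset.single_le_sum (f := fun k => (c k : ℝ))
      (fun _ _ => Nat.cast_nonneg _) (Finset.mem_univ j))
  have hc12 : c₁ ≤ c₂ := by nlinarith
  have hj : c₂ * ‖lam‖ ≤ ⟪α j, lam⟫ := by
    refine hc₂prop lam j (fun k hk => ?_)
    obtain ⟨h1, h2⟩ := hlam k hk
    constructor <;> nlinarith
  rw [ha, sum_inner]
  simp_rw [real_inner_smul_left]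
  have h1 : ∀ k ∈ Finset.univ.erase j,
      (c k : ℝ) * (-(c₁ * ‖lam‖)) ≤ (c k : ℝ) * ⟪α k, lam⟫ := by
    intro k hk
    have := (hlam k (Finset.ne_of_mem_erase hk)).1
    exact mul_le_mul_of_nonneg_left (by linarith) (Nat.cast_nonneg _)
  have hsum := Finset.sum_le_sum h1
  rw [← Finset.sum_mul] at hsum
  have herase : (∑ k ∈ Finset.univ.erase j, (c k : ℝ)) ≤ ∑ k, (c k : ℝ) :=
    Finset.sum_le_sum_of_subset_of_nonneg (Finset.erase_subset _ _)
      (fun _ _ _ => Nat.cast_nonneg _)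
  have herase_nn : (0:ℝ) ≤ ∑ k ∈ Finset.univ.erase j, (c k : ℝ) :=
    Finset.sum_nonneg (fun _ _ => Nat.cast_nonneg _)
  have hsplit : (∑ k, (c k : ℝ) * ⟪α k, lam⟫) =
      (c j : ℝ) * ⟪α j, lam⟫ + ∑ k ∈ Finset.univ.erase j, (c k : ℝ) * ⟪α k, lam⟫ :=
    (Finset.add_sum_erase _ _ (Finset.mem_univ j)).symm
  have hipos : (0:ℝ) ≤ ⟪α j, lam⟫ := le_trans (mul_nonneg hc₂.le hnn) hj
  have hjterm : ⟪α j, lam⟫ ≤ (c j : ℝ) * ⟪α j, lam⟫ := le_mul_of_one_le_left hipos hLj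
  rw [hsplit]
  nlinarith [mul_le_mul_of_nonneg_right herase (mul_nonneg hc₁.le hnn)]
end

section
/- Suppose c₂ > 0 is a constant such that for every λ ∈ V and every 1 ≤ j ≤ ℓ, if −c₂·‖λ‖ ≤ ⟨α_k, λ⟩ ≤ ⟨α_j, λ⟩ + c₂·‖λ‖ for all k ≠ j then ⟨α_j, λ⟩ ≥ c₂·‖λ‖. Assume moreover ⟨Λ_j, Λ_k⟩ ≥ 0 for all 1 ≤ j, k ≤ ℓ, and set M₁ := min_{1≤k≤ℓ} ‖Λ_k‖, M₂ := max_{1≤k≤ℓ} ‖Λ_k‖, L₂ := Σ_{k=1}^ℓ ‖Λ_k‖. Let c₁ > 0 satisfy c₁ ≤ c₂ and M₂·L₂·c₁ < M₁²·c₂, and set c₅ := M₁²·c₂ − M₂·L₂·c₁ > 0. Then for every 1 ≤ j ≤ ℓ and every λ ∈ V satisfying −c₁·‖λ‖ ≤ ⟨α_k, λ⟩ and ⟨α_k, λ⟩ ≤ ⟨α_j, λ⟩ + c₁·‖λ‖ for all k ≠ j, one has ⟨Λ_j, λ⟩ ≥ c₅·‖λ‖. -/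
open RealInnerProductSpace

/-- Given the `c₂`-property, assume `⟨Λ_j, Λ_k⟩ ≥ 0` for all `j, k`, set
`M₁ := min_k ‖Λ_k‖`, `M₂ := max_k ‖Λ_k‖`, `L₂ := Σ_k ‖Λ_k‖`.  Let `c₁ > 0` with `c₁ ≤ c₂`
and `M₂·L₂·c₁ < M₁²·c₂`, and set `c₅ := M₁²·c₂ − M₂·L₂·c₁`. Then for every `j` and every
`λ` satisfying the `c₁`-inequalities one has `⟨Λ_j, λ⟩ ≥ c₅·‖λ‖`. -/
theorem stmt4 {V : Type*} [NormedAddCommGroup V] [InnerProductSpace ℝ V]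
    [FiniteDimensional ℝ V] {ℓ : ℕ} (hℓ : 1 ≤ ℓ)
    (α : Module.Basis (Fin ℓ) ℝ V) (Λ : Fin ℓ → V)
    (hdual : ∀ j k : Fin ℓ, ⟪α j, Λ k⟫ = if j = k then 1 else 0)
    (hΛpos : ∀ j k : Fin ℓ, 0 ≤ ⟪Λ j, Λ k⟫)
    (c₂ : ℝ) (hc₂ : 0 < c₂)
    (hc₂prop : ∀ (lam : V) (j : Fin ℓ),
      (∀ k : Fin ℓ, k ≠ j →
        -c₂ * ‖lam‖ ≤ ⟪α k, lam⟫ ∧ ⟪α k, lam⟫ ≤ ⟪α j, lam⟫ + c₂ * ‖lam‖) →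
      c₂ * ‖lam‖ ≤ ⟪α j, lam⟫)
    (c₁ : ℝ) (hc₁ : 0 < c₁) (hc₁₂ : c₁ ≤ c₂)
    (hM : (⨆ k, ‖Λ k‖) * (∑ k, ‖Λ k‖) * c₁ < (⨅ k, ‖Λ k‖) ^ 2 * c₂) :
    ∀ (j : Fin ℓ) (lam : V),
      (∀ k : Fin ℓ, k ≠ j →
        -c₁ * ‖lam‖ ≤ ⟪α k, lam⟫ ∧ ⟪α k, lam⟫ ≤ ⟪α j, lam⟫ + c₁ * ‖lam‖) →
      ((⨅ k, ‖Λ k‖) ^ 2 * c₂ - (⨆ k, ‖Λ k‖) * (∑ k, ‖Λ k‖) * c₁) * ‖lam‖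
        ≤ ⟪Λ j, lam⟫ := by
  intro j lam hineq
  have : Nonempty (Fin ℓ) := ⟨⟨0, hℓ⟩⟩
  set M₁ := ⨅ k, ‖Λ k‖ with hM₁
  set M₂ := ⨆ k, ‖Λ k‖ with hM₂'
  set L₂ := ∑ k, ‖Λ k‖ with hL₂
  -- basic facts about M₁, M₂, L₂
  have hM₁le : ∀ k, M₁ ≤ ‖Λ k‖ := fun k =>
    ciInf_le (Set.Finite.bddBelow (Set.finite_range _)) k
  have hM₂ge : ∀ k, ‖Λ k‖ ≤ M₂ := fun k =>
    le_ciSup (f := fun k => ‖Λ k‖) (Set.Finite.bddAbove (Set.finite_range _)) k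
  have hM₁0 : (0:ℝ) ≤ M₁ := le_ciInf fun k => norm_nonneg _
  have hM₂0 : (0:ℝ) ≤ M₂ := le_trans (norm_nonneg _) (hM₂ge j)
  have hnorm0 : (0:ℝ) ≤ ‖lam‖ := norm_nonneg _
  -- representation: lam = ∑ ⟪α k, lam⟫ • Λ k
  have hrep : lam = ∑ k, ⟪α k, lam⟫ • Λ k := by
    set μ := lam - ∑ k, ⟪α k, lam⟫ • Λ k with hμ
    have h0 : ∀ i, ⟪α i, μ⟫ = 0 := by
      intro i
      rw [hμ, inner_sub_right, inner_sum]
      simp [real_inner_smul_right, hdual, Finset.sum_ite_eq]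
    have hμ0 : μ = 0 := by
      have hself : ⟪μ, μ⟫ = (0:ℝ) := by
        calc ⟪μ, μ⟫ = ⟪∑ i, α.repr μ i • α i, μ⟫ := by rw [Module.Basis.sum_repr α μ]
        _ = ∑ i, α.repr μ i * ⟪α i, μ⟫ := by
            rw [sum_inner]; simp [real_inner_smul_left]
        _ = 0 := by simp [h0]
      exact inner_self_eq_zero.mp hself
    exact sub_eq_zero.mp hμ0
  have hinnerrep : ⟪Λ j, lam⟫ = ∑ k, ⟪α k, lam⟫ * ⟪Λ j, Λ k⟫ := by
    conv_lhs => rw [hrep]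
    rw [inner_sum]
    simp [real_inner_smul_right]
  -- the c₂ bound
  have hc2 : c₂ * ‖lam‖ ≤ ⟪α j, lam⟫ := by
    apply hc₂prop lam j
    intro k hk
    obtain ⟨h1, h2⟩ := hineq k hk
    constructor
    · nlinarith
    · nlinarith
  -- diagonal term bound
  have hdiag : c₂ * ‖lam‖ * M₁ ^ 2 ≤ ⟪α j, lam⟫ * ⟪Λ j, Λ j⟫ := by
    have h1 : M₁ ^ 2 ≤ ⟪Λ j, Λ j⟫ := by
      rw [real_inner_self_eq_norm_sq]
      exact pow_le_pow_left₀ hM₁0 (hM₁le j) 2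
    have h2 : (0:ℝ) ≤ c₂ * ‖lam‖ := mul_nonneg hc₂.le hnorm0
    nlinarith [hΛpos j j]
  -- off-diagonal bound
  have hoff : ∀ k ∈ Finset.univ.erase j,
      -(c₁ * ‖lam‖) * (M₂ * ‖Λ k‖) ≤ ⟪α k, lam⟫ * ⟪Λ j, Λ k⟫ := by
    intro k hk
    have hkj : k ≠ j := Finset.ne_of_mem_erase hk
    have h1 := (hineq k hkj).1
    have h2 := hΛpos j k
    have h3 : ⟪Λ j, Λ k⟫ ≤ M₂ * ‖Λ k‖ :=
      (real_inner_le_norm _ _).trans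
        (mul_le_mul_of_nonneg_right (hM₂ge j) (norm_nonneg _))
    have h1' : -(c₁ * ‖lam‖) ≤ ⟪α k, lam⟫ := by linarith
    have hA : -(c₁ * ‖lam‖) ≤ 0 := by nlinarith
    calc -(c₁ * ‖lam‖) * (M₂ * ‖Λ k‖) ≤ -(c₁ * ‖lam‖) * ⟪Λ j, Λ k⟫ :=
          mul_le_mul_of_nonpos_left h3 hA
    _ ≤ ⟪α k, lam⟫ * ⟪Λ j, Λ k⟫ := mul_le_mul_of_nonneg_right h1' h2
  have hsumoff : -(c₁ * ‖lam‖) * (M₂ * L₂) ≤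
      ∑ k ∈ Finset.univ.erase j, ⟪α k, lam⟫ * ⟪Λ j, Λ k⟫ := by
    have h1 : ∑ k ∈ Finset.univ.erase j, -(c₁ * ‖lam‖) * (M₂ * ‖Λ k‖) ≤
        ∑ k ∈ Finset.univ.erase j, ⟪α k, lam⟫ * ⟪Λ j, Λ k⟫ :=
      Finset.sum_le_sum hoff
    have h2 : ∑ k ∈ Finset.univ.erase j, ‖Λ k‖ ≤ L₂ :=
      Finset.sum_le_sum_of_subset_of_nonneg (Finset.subset_univ _)
        (fun k _ _ => norm_nonneg _)
    have h3 : ∑ k ∈ Finset.univ.erase j, -(c₁ * ‖lam‖) * (M₂ * ‖Λ k‖)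
        = -(c₁ * ‖lam‖) * M₂ * ∑ k ∈ Finset.univ.erase j, ‖Λ k‖ := by
      rw [Finset.mul_sum]; exact Finset.sum_congr rfl fun x _ => by ring
    have h4 : -(c₁ * ‖lam‖) * (M₂ * L₂) ≤
        -(c₁ * ‖lam‖) * M₂ * ∑ k ∈ Finset.univ.erase j, ‖Λ k‖ := by
      have hA : (0:ℝ) ≤ c₁ * ‖lam‖ * M₂ := by positivity
      nlinarith [mul_le_mul_of_nonneg_left h2 hA]
    linarith
  have hsplit : ⟪Λ j, lam⟫ =
      (∑ k ∈ Finset.univ.erase j, ⟪α k, lam⟫ * ⟪Λ j, Λ k⟫)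
        + ⟪α j, lam⟫ * ⟪Λ j, Λ j⟫ := by
    rw [hinnerrep, Finset.sum_erase_add _ _ (Finset.mem_univ j)]
  nlinarith
end

section
/- Let ρ > 0 and let λ, μ ∈ V satisfy ‖λ‖ ≥ ρ and ‖μ‖ ≤ ρ/√3. Then ‖λ‖²/√(‖λ‖² + ρ²) − ⟨μ, λ⟩/√(‖μ‖² + ρ²) ≥ (1/√2 − 1/√3)·ρ. -/
open RealInnerProductSpace

/-- Let `ρ > 0` and `λ, μ ∈ V` with `‖λ‖ ≥ ρ` and `‖μ‖ ≤ ρ/√3`. Then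
`‖λ‖²/√(‖λ‖² + ρ²) − ⟨μ, λ⟩/√(‖μ‖² + ρ²) ≥ (1/√2 − 1/√3)·ρ`. -/
theorem stmt8 {V : Type*} [NormedAddCommGroup V] [InnerProductSpace ℝ V]
    [FiniteDimensional ℝ V] (hdim : 1 ≤ Module.finrank ℝ V)
    (ρ : ℝ) (hρ : 0 < ρ) (lam μ : V)
    (hlam : ρ ≤ ‖lam‖) (hμ : ‖μ‖ ≤ ρ / Real.sqrt 3) :
    (1 / Real.sqrt 2 - 1 / Real.sqrt 3) * ρ ≤
      ‖lam‖ ^ 2 / Real.sqrt (‖lam‖ ^ 2 + ρ ^ 2)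
        - ⟪μ, lam⟫ / Real.sqrt (‖μ‖ ^ 2 + ρ ^ 2) := by
  set t := ‖lam‖ with ht
  have ht0 : 0 < t := lt_of_lt_of_le hρ hlam
  have hs3pos : (0:ℝ) < Real.sqrt 3 := by positivity
  have hs3sq : Real.sqrt 3 ^ 2 = 3 := Real.sq_sqrt (by norm_num)
  have hs2pos : (0:ℝ) < Real.sqrt 2 := by positivity
  have hs2sq : Real.sqrt 2 ^ 2 = 2 := Real.sq_sqrt (by norm_num)
  have hμ2 : 3 * ‖μ‖ ^ 2 ≤ ρ ^ 2 := by
    have h := mul_le_mul hμ hμ (norm_nonneg μ) (by positivity)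
    rw [div_mul_div_comm, Real.mul_self_sqrt (by norm_num : (0:ℝ) ≤ 3)] at h
    nlinarith [h]
  have hs1 : (0:ℝ) < Real.sqrt (‖μ‖ ^ 2 + ρ ^ 2) := by positivity
  have hstep2 : ⟪μ, lam⟫ / Real.sqrt (‖μ‖ ^ 2 + ρ ^ 2) ≤ t / 2 := by
    have hin : ⟪μ, lam⟫ ≤ ‖μ‖ * t := real_inner_le_norm μ lam
    have hb : 2 * ‖μ‖ ≤ Real.sqrt (‖μ‖ ^ 2 + ρ ^ 2) := by
      rw [show (2:ℝ) * ‖μ‖ = Real.sqrt ((2 * ‖μ‖) ^ 2) from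
        (Real.sqrt_sq (by positivity)).symm]
      apply Real.sqrt_le_sqrt
      nlinarith
    rw [div_le_iff₀ hs1]
    calc ⟪μ, lam⟫ ≤ ‖μ‖ * t := hin
      _ ≤ t / 2 * Real.sqrt (‖μ‖ ^ 2 + ρ ^ 2) := by nlinarith [ht0.le]
  have hs2' : (0:ℝ) < Real.sqrt (t ^ 2 + ρ ^ 2) := by positivity
  have hstep3 : t / Real.sqrt 2 ≤ t ^ 2 / Real.sqrt (t ^ 2 + ρ ^ 2) := by
    have hb : Real.sqrt (t ^ 2 + ρ ^ 2) ≤ Real.sqrt 2 * t := by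
      rw [show Real.sqrt 2 * t = Real.sqrt (2 * t ^ 2) from ?_]
      · apply Real.sqrt_le_sqrt; nlinarith
      · rw [Real.sqrt_mul (by norm_num), Real.sqrt_sq ht0.le]
    rw [div_le_div_iff₀ hs2pos hs2']
    nlinarith [hb, hs2', ht0]
  have e2 : 1 / Real.sqrt 2 = Real.sqrt 2 / 2 := by
    rw [div_eq_div_iff hs2pos.ne' (by norm_num : (2:ℝ) ≠ 0)]
    simpa using (Real.mul_self_sqrt (by norm_num : (0:ℝ) ≤ 2)).symm
  have e3 : 1 / Real.sqrt 3 = Real.sqrt 3 / 3 := by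
    rw [div_eq_div_iff hs3pos.ne' (by norm_num : (3:ℝ) ≠ 0)]
    simpa using (Real.mul_self_sqrt (by norm_num : (0:ℝ) ≤ 3)).symm
  have hs2le : (1:ℝ) ≤ Real.sqrt 2 := by
    rw [show (1:ℝ) = Real.sqrt 1 from Real.sqrt_one.symm]
    exact Real.sqrt_le_sqrt (by norm_num)
  have hs3ge : (3:ℝ)/2 ≤ Real.sqrt 3 := by
    rw [show (3:ℝ)/2 = Real.sqrt ((3/2)^2) from (Real.sqrt_sq (by norm_num)).symm]
    exact Real.sqrt_le_sqrt (by norm_num)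
  have et : t / Real.sqrt 2 = t * (Real.sqrt 2 / 2) := by
    rw [div_eq_mul_inv, inv_eq_one_div, e2]
  have hfin : (1 / Real.sqrt 2 - 1 / Real.sqrt 3) * ρ ≤ t / Real.sqrt 2 - t / 2 := by
    rw [e2, e3, et]
    nlinarith [mul_nonneg (by linarith : (0:ℝ) ≤ Real.sqrt 2 / 2 - 1 / 2)
      (by linarith : (0:ℝ) ≤ t - ρ), mul_nonneg (by linarith : (0:ℝ) ≤ Real.sqrt 3 / 3 - 1 / 2) hρ.le]
  linarith [hstep2, hstep3, hfin]
end

section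
/- There exists a constant C > 0 such that for every t ∈ ℝ with t ≠ 0 and every r ≥ 0, one has |t| · ∫₀¹ |r² − t² − s²| / |s² + r² − t² − 2sti|² ds ≤ C, where |s² + r² − t² − 2sti| denotes the modulus of the complex number s² + r² − t² − 2sti. -/
open MeasureTheory Real Filter Topology

lemma ftc_piece (T aa : ℝ) (hT : 0 < T) {p q : ℝ} (hp : 0 < p) (hpq : p ≤ q) :
    ∫ s in p..q, 2*T*(s^2 - aa)/((s^2+aa)^2+4*s^2*T^2)
      = Real.arctan ((q^2+aa)/(2*q*T)) - Real.arctan ((p^2+aa)/(2*p*T)) := by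
  have hpos : ∀ s ∈ Set.uIcc p q, 0 < s := by
    intro s hs
    have := (Set.uIcc_of_le hpq ▸ hs).1
    linarith
  apply intervalIntegral.integral_eq_sub_of_hasDerivAt
  · intro s hs
    have hs0 : 0 < s := hpos s hs
    have hden : 2*s*T ≠ 0 := by positivity
    have hA : HasDerivAt (fun s : ℝ => s^2+aa) (2*s) s := by
      simpa using (hasDerivAt_pow 2 s).add_const aa
    have hB : HasDerivAt (fun s : ℝ => 2*s*T) (2*T) s := by
      simpa [mul_comm, mul_assoc] using ((hasDerivAt_id s).const_mul 2).mul_const T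
    have h1 : HasDerivAt (fun s : ℝ => (s^2+aa)/(2*s*T))
        ((2*s*(2*s*T) - (s^2+aa)*(2*T))/(2*s*T)^2) s := hA.div hB hden
    have h2 := h1.arctan
    refine h2.congr_deriv ?_
    have hD : 0 < (s^2+aa)^2+4*s^2*T^2 := by positivity
    have h1u : 0 < 1 + ((s^2+aa)/(2*s*T))^2 := by positivity
    field_simp
    ring
  · apply ContinuousOn.intervalIntegrable
    apply ContinuousOn.div
    · fun_prop
    · fun_prop
    · intro s hs
      have hs0 : 0 < s := hpos s hs
      positivity

/-- There is a constant `C > 0` such that for every `t ≠ 0` and `r ≥ 0`,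
`|t| · ∫₀¹ |r² − t² − s²| / |s² + r² − t² − 2sti|² ds ≤ C`. -/
theorem stmt10 :
    ∃ C : ℝ, 0 < C ∧ ∀ t : ℝ, t ≠ 0 → ∀ r : ℝ, 0 ≤ r →
      |t| * ∫ s in (0 : ℝ)..1,
          |r ^ 2 - t ^ 2 - s ^ 2| /
            (‖
              ((s : ℂ) ^ 2 + (r : ℂ) ^ 2 - (t : ℂ) ^ 2
                - 2 * (s : ℂ) * (t : ℂ) * Complex.I)‖) ^ 2
        ≤ C := by
  refine ⟨4, by norm_num, ?_⟩
  intro t ht r hr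
  have hT : 0 < |t| := abs_pos.mpr ht
  set T := |t| with hTdef
  set aa := r^2 - t^2 with haa
  have hT2 : T^2 = t^2 := sq_abs t
  set g : ℝ → ℝ := fun s => Real.arctan ((s^2+aa)/(2*s*T)) with hg
  set D : ℝ → ℝ := fun s => (s^2+aa)^2+4*s^2*T^2 with hD
  set F : ℝ → ℝ := fun s => T * |s^2 - aa| / D s with hFdef
  -- rewrite the statement integrand as F
  have habs : ∀ s : ℝ, |t| * (|r ^ 2 - t ^ 2 - s ^ 2| /
      (‖((s : ℂ) ^ 2 + (r : ℂ) ^ 2 - (t : ℂ) ^ 2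
          - 2 * (s : ℂ) * (t : ℂ) * Complex.I)‖) ^ 2) = F s := by
    intro s
    have hz : ((s:ℂ)^2+(r:ℂ)^2-(t:ℂ)^2 - 2*(s:ℂ)*(t:ℂ)*Complex.I)
        = Complex.ofReal (s^2+aa) + Complex.ofReal (-(2*s*t)) * Complex.I := by
      simp only [haa]; push_cast; ring
    have h2 : (‖(s:ℂ)^2+(r:ℂ)^2-(t:ℂ)^2 - 2*(s:ℂ)*(t:ℂ)*Complex.I‖)^2 = D s := by
      rw [hz, Complex.sq_norm, Complex.normSq_add_mul_I]
      simp only [hD, haa, hTdef, sq_abs]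
      ring
    have h3 : r ^ 2 - t ^ 2 - s ^ 2 = -(s^2 - aa) := by rw [haa]; ring
    rw [h2, h3, abs_neg]
    show |t| * (|s ^ 2 - aa| / D s) = T * |s ^ 2 - aa| / D s
    rw [mul_div_assoc]
  rw [← intervalIntegral.integral_const_mul]
  simp only [haa, hTdef, habs]
  have hDpos : ∀ s : ℝ, s ≠ 0 → 0 < D s := by
    intro s hs
    simp only [hD]
    have h1 : 0 < s^2 := by positivity
    have h2 : 0 < T^2 := by positivity
    nlinarith [sq_nonneg (s^2+aa), mul_pos h1 h2]
  -- F is continuous on any interval away from 0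
  have hFcont : ∀ p q : ℝ, (∀ s ∈ Set.uIcc p q, s ≠ 0) → ContinuousOn F (Set.uIcc p q) := by
    intro p q hpq
    simp only [hFdef, hD]
    apply ContinuousOn.div
    · fun_prop
    · fun_prop
    · intro s hs
      have := hDpos s (hpq s hs)
      simp only [hD] at this
      exact ne_of_gt this
  have hgb : ∀ s : ℝ, -(π/2) < g s ∧ g s < π/2 := by
    intro s
    exact ⟨Real.neg_pi_div_two_lt_arctan _, Real.arctan_lt_pi_div_two _⟩
  -- key bound on [p, 1] for p > 0
  have key : ∀ p : ℝ, 0 < p → p ≤ 1 → (∫ s in p..1, F s) ≤ π := by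
    intro p hp hp1
    set c := min 1 (max p (Real.sqrt aa)) with hc
    have hpc : p ≤ c := le_min hp1 (le_max_left _ _)
    have hc1 : c ≤ 1 := min_le_left _ _
    have hc0 : 0 < c := lt_of_lt_of_le hp hpc
    have hInt1 : IntervalIntegrable F volume p c := by
      apply (hFcont p c ?_).intervalIntegrable
      intro s hs
      rw [Set.uIcc_of_le hpc] at hs
      exact ne_of_gt (lt_of_lt_of_le hp hs.1)
    have hInt2 : IntervalIntegrable F volume c 1 := by
      apply (hFcont c 1 ?_).intervalIntegrable
      intro s hs
      rw [Set.uIcc_of_le hc1] at hs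
      exact ne_of_gt (lt_of_lt_of_le hc0 hs.1)
    have int1 : ∫ s in p..c, F s = (g p - g c)/2 := by
      rcases eq_or_lt_of_le hpc with h|h
      · rw [← h]
        simp [intervalIntegral.integral_same]
      · have hmax : p < max p (Real.sqrt aa) ∧ p < 1 := by
          constructor <;> [skip; exact lt_of_lt_of_le h hc1]
          by_contra hcon
          push_neg at hcon
          have : c ≤ p := le_trans (min_le_right _ _) hcon
          linarith
        have hpsq : p < Real.sqrt aa := by
          rcases max_cases p (Real.sqrt aa) with ⟨he, _⟩ | ⟨_, hlt⟩
          · rw [he] at hmax; exact absurd hmax.1 (lt_irrefl p)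
          · exact hlt
        have haapos : 0 ≤ aa := by
          by_contra hcon
          push_neg at hcon
          have := Real.sqrt_eq_zero'.mpr hcon.le
          rw [this] at hpsq
          linarith
        have hcsq : c ≤ Real.sqrt aa := le_trans (min_le_right _ _) (le_of_eq (max_eq_right hpsq.le))
        have hsq : ∀ s ∈ Set.uIcc p c, s^2 ≤ aa := by
          intro s hs
          rw [Set.uIcc_of_le hpc] at hs
          calc s^2 ≤ (Real.sqrt aa)^2 := by
                apply pow_le_pow_left₀ (le_trans hp.le hs.1) (le_trans hs.2 hcsq)
            _ = aa := Real.sq_sqrt haapos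
        have hcongr : Set.EqOn F
            (fun s => -(2*T*(s^2 - aa)/((s^2+aa)^2+4*s^2*T^2))/2) (Set.uIcc p c) := by
          intro s hs
          have h1 : |s^2 - aa| = -(s^2 - aa) := abs_of_nonpos (by linarith [hsq s hs])
          simp only [hFdef, hD, h1]
          ring
        rw [intervalIntegral.integral_congr hcongr]
        simp only [intervalIntegral.integral_div, intervalIntegral.integral_neg]
        rw [ftc_piece T aa hT hp hpc]
        simp only [hg]
        ring
    have int2 : ∫ s in c..1, F s = (g 1 - g c)/2 := by
      rcases eq_or_lt_of_le hc1 with h|h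
      · rw [h]
        simp [intervalIntegral.integral_same]
      · have hcmax : c = max p (Real.sqrt aa) := by
          rcases min_cases 1 (max p (Real.sqrt aa)) with ⟨he, _⟩ | ⟨he, _⟩
          · rw [← hc] at he; rw [he] at h; exact absurd h (lt_irrefl 1)
          · exact he
        have hcsq : Real.sqrt aa ≤ c := hcmax ▸ le_max_right _ _
        have hsq : ∀ s ∈ Set.uIcc c 1, aa ≤ s^2 := by
          intro s hs
          rw [Set.uIcc_of_le hc1] at hs
          have h1 : aa ≤ (Real.sqrt aa)^2 := by
            rcases le_or_gt 0 aa with h'|h'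
            · rw [Real.sq_sqrt h']
            · nlinarith [Real.sqrt_nonneg aa]
          calc aa ≤ (Real.sqrt aa)^2 := h1
            _ ≤ s^2 := by
                apply pow_le_pow_left₀ (Real.sqrt_nonneg aa) (le_trans hcsq hs.1)
        have hcongr : Set.EqOn F
            (fun s => (2*T*(s^2 - aa)/((s^2+aa)^2+4*s^2*T^2))/2) (Set.uIcc c 1) := by
          intro s hs
          have h1 : |s^2 - aa| = s^2 - aa := abs_of_nonneg (by linarith [hsq s hs])
          simp only [hFdef, hD, h1]
          ring
        rw [intervalIntegral.integral_congr hcongr]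
        simp only [intervalIntegral.integral_div]
        rw [ftc_piece T aa hT hc0 hc1]
    rw [← intervalIntegral.integral_add_adjacent_intervals hInt1 hInt2, int1, int2]
    have h1 := hgb p
    have h2 := hgb c
    have h3 := hgb 1
    linarith
  -- integrability on [0,1]
  have hFint : IntervalIntegrable F volume 0 1 := by
    by_cases haa0 : aa = 0
    · have hcont : Continuous (fun s : ℝ => T/(s^2+4*T^2)) := by
        apply continuous_const.div (by fun_prop)
        intro x
        positivity
      apply (hcont.intervalIntegrable 0 1).congr_ae
      apply MeasureTheory.ae_restrict_of_ae
      have hmem : ∀ᵐ s : ℝ, s ≠ (0:ℝ) := by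
        have h0 : (volume : Measure ℝ) {(0:ℝ)} = 0 := measure_singleton 0
        rw [MeasureTheory.ae_iff]
        convert h0 using 2
        ext x
        simp
      filter_upwards [hmem] with s hs0
      have hs2 : (0:ℝ) < s^2 := by positivity
      have h1 : s^2+4*T^2 ≠ 0 := by positivity
      have h2 : (s^2+aa)^2+4*s^2*T^2 ≠ 0 := by
        simp only [haa0]
        positivity
      simp only [hFdef, hD, haa0, sub_zero, add_zero, abs_of_nonneg (sq_nonneg s)]
      rw [eq_div_iff (by simpa [haa0] using h2)]
      field_simp
    · apply (ContinuousOn.intervalIntegrable ?_)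
      simp only [hFdef, hD]
      apply ContinuousOn.div
      · fun_prop
      · fun_prop
      · intro s hs
        rcases eq_or_ne s 0 with h|h
        · subst h
          simpa using fun hcon => haa0 (by nlinarith [hcon])
        · have := hDpos s h
          simp only [hD] at this
          exact ne_of_gt this
  -- pass to the limit p → 0⁺
  have hP := intervalIntegral.continuousOn_primitive_interval' hFint
      (Set.left_mem_uIcc (a := (0:ℝ)) (b := 1))
  have hP0 : ContinuousWithinAt (fun b => ∫ x in (0:ℝ)..b, F x) (Set.uIcc (0:ℝ) 1) 0 :=
    hP 0 (Set.left_mem_uIcc)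
  have hmemIoc : Set.Ioc (0:ℝ) 1 ∈ 𝓝[>] (0:ℝ) :=
    Ioc_mem_nhdsGT_of_mem ⟨le_refl 0, zero_lt_one⟩
  have hle : 𝓝[>] (0:ℝ) ≤ 𝓝[Set.uIcc (0:ℝ) 1] 0 := by
    rw [nhdsWithin_le_iff]
    apply Filter.mem_of_superset hmemIoc
    rw [Set.uIcc_of_le (by norm_num : (0:ℝ) ≤ 1)]
    exact Set.Ioc_subset_Icc_self
  have htend : Tendsto (fun x => ∫ s in (0:ℝ)..x, F s) (𝓝[>] (0:ℝ)) (𝓝 0) := by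
    have := hP0.tendsto
    rw [intervalIntegral.integral_same] at this
    exact this.mono_left hle
  have hev : ∀ᶠ x in 𝓝[>] (0:ℝ), (∫ s in (0:ℝ)..1, F s) - π ≤ ∫ s in (0:ℝ)..x, F s := by
    filter_upwards [hmemIoc] with x hx
    have hInt1 : IntervalIntegrable F volume 0 x :=
      hFint.mono_set (Set.uIcc_subset_uIcc Set.left_mem_uIcc
        (by rw [Set.uIcc_of_le (by norm_num : (0:ℝ) ≤ 1)]; exact ⟨hx.1.le, hx.2⟩))
    have hInt2 : IntervalIntegrable F volume x 1 :=
      hFint.mono_set (Set.uIcc_subset_uIcc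
        (by rw [Set.uIcc_of_le (by norm_num : (0:ℝ) ≤ 1)]; exact ⟨hx.1.le, hx.2⟩)
        Set.right_mem_uIcc)
    have hadd := intervalIntegral.integral_add_adjacent_intervals hInt1 hInt2
    have := key x hx.1 hx.2
    linarith [hadd]
  have hfin : (∫ s in (0:ℝ)..1, F s) - π ≤ 0 := ge_of_tendsto htend hev
  linarith [Real.pi_le_four]
end

section
/- Let n ≥ 1 be an integer and γ > 1 a real number with n < 2γ. Then there exist constants 0 < c ≤ C, depending only on n and γ, such that for every T > 0 and every z ∈ ℂ with Re z > 0 and |z| ≤ T: c·(|z|/Re z)^{γ−1} ≤ |z|^{2γ−n} · ∫₀^{3T} r^{n−1} · |r² + z²|^{−γ} dr ≤ C·(|z|/Re z)^{γ−1}. -/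
open MeasureTheory

open intervalIntegral Real

lemma sq_rpow_half_neg {x : ℝ} (hx : 0 ≤ x) (γ : ℝ) : (x ^ 2) ^ (-(γ/2)) = x ^ (-γ) := by
  rw [← Real.rpow_natCast x 2, ← Real.rpow_mul hx]
  norm_num
  congr 1
  ring

lemma aux_tail {p a c : ℝ} (hp : p < -1) (ha : 0 < a) (hac : a ≤ c) :
    ∫ s in a..c, s ^ p ≤ a ^ (p+1) / (-(p+1)) := by
  rw [integral_rpow (Or.inr ⟨by linarith, by
    rw [Set.uIcc_of_le hac]; intro h; exact absurd h.1 (by linarith)⟩)]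
  have h1 : (0:ℝ) ≤ c ^ (p+1) := Real.rpow_nonneg (by linarith) _
  have key : (c ^ (p+1) - a ^ (p+1)) / (p+1) = (a ^ (p+1) - c ^ (p+1)) / (-(p+1)) := by
    rw [← neg_div_neg_eq]; ring_nf
  rw [key]
  gcongr <;> linarith [h1]

lemma aux2 {γ a c : ℝ} (hγ : 1 < γ) (ha : 0 < a) (hc : 0 ≤ c) :
    ∫ s in (0:ℝ)..c, (s^2 + a^2) ^ (-(γ/2)) ≤ (1 + 1/(γ-1)) * a ^ (1-γ) := by
  have hcont : Continuous fun s : ℝ => (s^2 + a^2) ^ (-(γ/2)) := by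
    apply Continuous.rpow_const (by continuity)
    intro x; left; positivity
  have hpt : ∀ s : ℝ, (s^2 + a^2) ^ (-(γ/2)) ≤ a ^ (-γ) := by
    intro s
    rw [← sq_rpow_half_neg ha.le]
    exact Real.rpow_le_rpow_of_nonpos (by positivity) (by nlinarith [sq_nonneg s]) (by linarith)
  have hmul : a * a ^ (-γ) = a ^ (1-γ) := by
    nth_rewrite 1 [← Real.rpow_one a]
    rw [← Real.rpow_add ha]; ring_nf
  have hanneg : (0:ℝ) ≤ a ^ (1-γ) := Real.rpow_nonneg ha.le _
  have hfrac : (0:ℝ) < 1/(γ-1) := one_div_pos.mpr (by linarith)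
  have hpiece : ∀ d : ℝ, 0 ≤ d → d ≤ a → ∫ s in (0:ℝ)..d, (s^2 + a^2) ^ (-(γ/2)) ≤ a ^ (1-γ) := by
    intro d hd hda
    calc ∫ s in (0:ℝ)..d, (s^2 + a^2) ^ (-(γ/2))
        ≤ ∫ _ in (0:ℝ)..d, a ^ (-γ) :=
          intervalIntegral.integral_mono_on hd (hcont.intervalIntegrable _ _)
            intervalIntegrable_const (fun x _ => hpt x)
      _ = d * a ^ (-γ) := by simp
      _ ≤ a * a ^ (-γ) := by
          apply mul_le_mul_of_nonneg_right hda (Real.rpow_nonneg ha.le _)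
      _ = a ^ (1-γ) := hmul
  rcases le_or_gt c a with hca | hac
  · calc ∫ s in (0:ℝ)..c, (s^2 + a^2) ^ (-(γ/2)) ≤ a ^ (1-γ) := hpiece c hc hca
      _ ≤ (1 + 1/(γ-1)) * a ^ (1-γ) := by nlinarith
  · rw [← intervalIntegral.integral_add_adjacent_intervals
      (hcont.intervalIntegrable 0 a) (hcont.intervalIntegrable a c)]
    have h2 : ∫ s in a..c, (s^2 + a^2) ^ (-(γ/2)) ≤ a ^ (1-γ) / (γ-1) := by
      calc ∫ s in a..c, (s^2 + a^2) ^ (-(γ/2))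
          ≤ ∫ s in a..c, s ^ (-γ) := by
            apply intervalIntegral.integral_mono_on hac.le (hcont.intervalIntegrable _ _)
            · apply ContinuousOn.intervalIntegrable
              apply ContinuousOn.rpow_const continuousOn_id
              intro x hx; left
              rw [Set.uIcc_of_le hac.le] at hx
              exact ne_of_gt (lt_of_lt_of_le ha hx.1)
            · intro x hx
              rw [← sq_rpow_half_neg (le_trans ha.le hx.1)]
              exact Real.rpow_le_rpow_of_nonpos
                (by nlinarith [lt_of_lt_of_le ha hx.1]) (by nlinarith) (by linarith)
        _ ≤ (a:ℝ) ^ (-γ+1) / (-(-γ+1)) := aux_tail (by linarith) ha hac.le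
        _ = a ^ (1-γ) / (γ-1) := by ring_nf
    have h1 := hpiece a ha.le le_rfl
    have : a ^ (1-γ) + a ^ (1-γ) / (γ-1) = (1 + 1/(γ-1)) * a ^ (1-γ) := by ring
    linarith

lemma aux3 {γ a b c : ℝ} (hγ : 1 < γ) (ha : 0 < a) (hb : 0 ≤ b) (hbc : b ≤ c) :
    ∫ r in (0:ℝ)..c, ((r - b)^2 + a^2) ^ (-(γ/2)) ≤ 2 * ((1 + 1/(γ-1)) * a ^ (1-γ)) := by
  have hc : 0 ≤ c := le_trans hb hbc
  have hcont : Continuous fun s : ℝ => (s^2 + a^2) ^ (-(γ/2)) := by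
    apply Continuous.rpow_const (by continuity)
    intro x; left; positivity
  have hnn : ∀ s : ℝ, 0 ≤ (s^2 + a^2) ^ (-(γ/2)) := fun s => Real.rpow_nonneg (by positivity) _
  have step1 : (∫ r in (0:ℝ)..c, ((r - b)^2 + a^2) ^ (-(γ/2)))
      = ∫ s in (-b)..(c - b), (s^2 + a^2) ^ (-(γ/2)) := by
    have := intervalIntegral.integral_comp_sub_right
      (fun s : ℝ => (s^2 + a^2) ^ (-(γ/2))) b (a := (0:ℝ)) (b := c)
    simpa using this
  rw [step1]
  have step2 : (∫ s in (-b)..(c - b), (s^2 + a^2) ^ (-(γ/2)))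
      ≤ ∫ s in (-c)..c, (s^2 + a^2) ^ (-(γ/2)) := by
    apply intervalIntegral.integral_mono_interval (by linarith) (by linarith) (by linarith)
      (Filter.Eventually.of_forall fun s => hnn s) (hcont.intervalIntegrable _ _)
  have step3 : (∫ s in (-c)..(0:ℝ), (s^2 + a^2) ^ (-(γ/2)))
      = ∫ s in (0:ℝ)..c, (s^2 + a^2) ^ (-(γ/2)) := by
    have := intervalIntegral.integral_comp_neg (a := -c) (b := (0:ℝ))
      (f := fun s : ℝ => (s^2 + a^2) ^ (-(γ/2)))
    simpa using this
  have step4 : (∫ s in (-c)..c, (s^2 + a^2) ^ (-(γ/2)))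
      = (∫ s in (-c)..(0:ℝ), (s^2 + a^2) ^ (-(γ/2))) + ∫ s in (0:ℝ)..c, (s^2 + a^2) ^ (-(γ/2)) :=
    (intervalIntegral.integral_add_adjacent_intervals
      (hcont.intervalIntegrable _ _) (hcont.intervalIntegrable _ _)).symm
  have h2 := aux2 (a := a) (c := c) hγ ha hc
  linarith [step2, step4.symm, step3]

lemma rpow_helper1 {x : ℝ} (hx : 0 < x) (γ : ℝ) :
    ((x^2/2) : ℝ) ^ (-γ) = 2 ^ γ * x ^ (-(2*γ)) := by
  rw [Real.div_rpow (by positivity) (by norm_num)]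
  have h2 : ((x^2):ℝ)^(-γ) = x^(-(2*γ)) := by
    rw [← Real.rpow_natCast x 2, ← Real.rpow_mul hx.le]
    congr 1; push_cast; ring
  have h3 : (2:ℝ)^(-γ) = ((2:ℝ)^γ)⁻¹ := Real.rpow_neg (by norm_num) γ
  rw [h2, h3]; field_simp

lemma natpow_cast_sub_one {r : ℝ} (hr : 0 ≤ r) {n : ℕ} (hn : 1 ≤ n) :
    r ^ (n-1) = r ^ ((n:ℝ)-1) := by
  rw [← Real.rpow_natCast r (n-1)]
  congr 1
  rw [Nat.cast_sub hn, Nat.cast_one]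

set_option maxHeartbeats 2000000 in
lemma core (n : ℕ) (hn : 1 ≤ n) (γ : ℝ) (hγ : 1 < γ) (hn2 : (n : ℝ) < 2 * γ)
    (T : ℝ) (hT : 0 < T) (z : ℂ) (hz : 0 < z.re) (hzT : ‖z‖ ≤ T) :
    min ((2:ℝ) ^ (1-2*γ) / n) ((2:ℝ) ^ (1-(n:ℝ)) * 5 ^ (-γ)) *
        (‖z‖ / z.re) ^ (γ - 1) ≤
      ‖z‖ ^ (2 * γ - (n : ℝ)) *
        (∫ r in (0 : ℝ)..(3 * T), r ^ (n - 1) * ‖(r : ℂ) ^ 2 + z ^ 2‖ ^ (-γ)) ∧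
      ‖z‖ ^ (2 * γ - (n : ℝ)) *
        (∫ r in (0 : ℝ)..(3 * T), r ^ (n - 1) * ‖(r : ℂ) ^ 2 + z ^ 2‖ ^ (-γ)) ≤
      ((2:ℝ) ^ (n:ℝ) * (1 + 1/(γ-1)) + (2:ℝ) ^ ((n:ℝ)-γ) / (2*γ-(n:ℝ))) *
        (‖z‖ / z.re) ^ (γ - 1) := by
  have hγ1 : (0:ℝ) < γ - 1 := by linarith
  set ρ := ‖z‖ with hρdef
  set b := |z.im| with hbdef
  have hb : 0 ≤ b := abs_nonneg _
  have hρa : z.re ≤ ρ := le_trans (le_abs_self _) (Complex.abs_re_le_norm z)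
  have hρ : 0 < ρ := lt_of_lt_of_le hz hρa
  have hbρ : b ≤ ρ := Complex.abs_im_le_norm z
  have hsq : z.re^2 + b^2 = ρ^2 := by
    have h1 : b^2 = z.im^2 := sq_abs z.im
    have h2 : ρ^2 = Complex.normSq z := Complex.sq_norm z
    rw [h1, h2, Complex.normSq_apply]; ring
  have hE : ∀ r : ℝ, (‖(r:ℂ)^2 + z^2‖)^2
      = ((r-b)^2+z.re^2) * ((r+b)^2+z.re^2) := by
    intro r
    have h1 : (‖(r:ℂ)^2+z^2‖)^2
        = ((r-z.im)^2+z.re^2) * ((r+z.im)^2+z.re^2) := by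
      rw [Complex.sq_norm, Complex.normSq_apply]
      simp only [pow_two, Complex.add_re, Complex.add_im, Complex.mul_re, Complex.mul_im,
        Complex.ofReal_re, Complex.ofReal_im]
      ring
    rw [h1]
    rcases abs_cases z.im with ⟨h, _⟩ | ⟨h, _⟩ <;> rw [hbdef, h] <;> ring
  have hEpos : ∀ r : ℝ, 0 < ((r-b)^2+z.re^2) * ((r+b)^2+z.re^2) := fun r =>
    mul_pos (add_pos_of_nonneg_of_pos (sq_nonneg _) (pow_pos hz 2))
      (add_pos_of_nonneg_of_pos (sq_nonneg _) (pow_pos hz 2))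
  have habs_pos : ∀ r : ℝ, 0 < ‖(r:ℂ)^2+z^2‖ := by
    intro r
    have h1 := hE r
    have h2 := hEpos r
    nlinarith [norm_nonneg ((r:ℂ)^2+z^2)]
  have hfeq : ∀ r : ℝ, ‖(r:ℂ)^2+z^2‖ ^ (-γ)
      = (((r-b)^2+z.re^2) * ((r+b)^2+z.re^2)) ^ (-(γ/2)) := by
    intro r
    rw [← sq_rpow_half_neg (habs_pos r).le, hE r]
  set g : ℝ → ℝ := fun r =>
    r ^ (n-1) * (((r-b)^2+z.re^2) * ((r+b)^2+z.re^2)) ^ (-(γ/2)) with hgdef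
  have hgcont : Continuous g := by
    rw [hgdef]
    exact (continuous_pow _).mul
      (Continuous.rpow_const (by continuity) (fun r => Or.inl (hEpos r).ne'))
  have hgint : ∀ u v : ℝ, IntervalIntegrable g volume u v :=
    fun u v => hgcont.intervalIntegrable u v
  have hgnn : ∀ r : ℝ, 0 ≤ r → 0 ≤ g r := fun r hr =>
    mul_nonneg (pow_nonneg hr _) (Real.rpow_nonneg (hEpos r).le _)
  have hJ : (∫ r in (0:ℝ)..(3*T), r ^ (n-1) * ‖(r:ℂ)^2 + z^2‖ ^ (-γ))
      = ∫ r in (0:ℝ)..(3*T), g r :=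
    intervalIntegral.integral_congr (fun r _ => by rw [hgdef]; simp only [hfeq r])
  rw [hJ]
  have hXnn : 0 ≤ (ρ/z.re) ^ (γ-1) := Real.rpow_nonneg (by positivity) _
  have hX1 : 1 ≤ (ρ/z.re) ^ (γ-1) :=
    Real.one_le_rpow ((one_le_div hz).mpr hρa) (by linarith)
  have hXeq : (ρ/z.re) ^ (γ-1) = ρ^(γ-1) * z.re^(1-γ) := by
    rw [Real.div_rpow hρ.le hz.le, div_eq_mul_inv, ← Real.rpow_neg hz.le]
    congr 1 <;> ring
  have hρpow : ρ^(2*γ-(n:ℝ)) * (ρ^((n:ℝ)-1) * ρ^(-γ)) = ρ^(γ-1) := by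
    rw [← Real.rpow_add hρ, ← Real.rpow_add hρ]
    congr 1 <;> ring
  have hgae : 0 ≤ᵐ[volume.restrict (Set.Ioc (0:ℝ) (3*T))] g :=
    (ae_restrict_iff' measurableSet_Ioc).mpr
      (Filter.Eventually.of_forall fun x hx => hgnn x hx.1.le)
  have h2ρ3T : 2*ρ ≤ 3*T := by linarith
  constructor
  · -- LOWER BOUND
    rcases le_or_gt (ρ/2) z.re with hA | hB
    · -- case A : z.re large
      have hXle : (ρ/z.re)^(γ-1) ≤ 2^(γ-1) :=
        Real.rpow_le_rpow (by positivity) (by rw [div_le_iff₀ hz]; linarith) (by linarith)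
      have hlow : (∫ r in (0:ℝ)..ρ, g r) ≤ ∫ r in (0:ℝ)..(3*T), g r :=
        intervalIntegral.integral_mono_interval le_rfl hρ.le (by linarith) hgae (hgint _ _)
      have hptA : ∀ r ∈ Set.Icc (0:ℝ) ρ,
          r^(n-1) * ((2*ρ^2)^2)^(-(γ/2)) ≤ g r := by
        intro r hr
        simp only [hgdef]
        apply mul_le_mul_of_nonneg_left ?_ (pow_nonneg hr.1 _)
        apply Real.rpow_le_rpow_of_nonpos (hEpos r) ?_ (by linarith)
        have ha2 : z.re^2 = ρ^2 - b^2 := by linarith [hsq]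
        rw [ha2]
        have hr2 : r^2 ≤ ρ^2 := by nlinarith [hr.1, hr.2]
        nlinarith [hr2, sq_nonneg (r*b),
          mul_nonneg (sub_nonneg.mpr hr2) (by positivity : (0:ℝ) ≤ 3*ρ^2+r^2)]
      have hmonoA : (∫ r in (0:ℝ)..ρ, r^(n-1) * ((2*ρ^2)^2)^(-(γ/2)))
          ≤ ∫ r in (0:ℝ)..ρ, g r :=
        intervalIntegral.integral_mono_on hρ.le
          (((continuous_pow _).mul continuous_const).intervalIntegrable _ _)
          (hgint _ _) hptA
      have hintA : (∫ r in (0:ℝ)..ρ, r^(n-1) * ((2*ρ^2)^2)^(-(γ/2)))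
          = ρ^n/n * ((2*ρ^2)^2)^(-(γ/2)) := by
        rw [intervalIntegral.integral_mul_const, integral_pow,
          show n-1+1 = n from by omega, zero_pow (by omega : n ≠ 0),
          Nat.cast_sub hn, Nat.cast_one]
        ring_nf
      have hcomb : ρ^(2*γ-(n:ℝ)) * ρ^((n:ℝ)) * ρ^(-(2*γ)) = 1 := by
        rw [← Real.rpow_add hρ, ← Real.rpow_add hρ,
          show 2*γ-(n:ℝ)+(n:ℝ)+(-(2*γ)) = 0 from by ring, Real.rpow_zero]
      have hsq2γ : ((ρ^2:ℝ))^(-γ) = ρ^(-(2*γ)) := by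
        rw [← Real.rpow_natCast ρ 2, ← Real.rpow_mul hρ.le]; congr 1; push_cast; ring
      have hvalA : ρ^(2*γ-(n:ℝ)) * (ρ^n/n * ((2*ρ^2)^2)^(-(γ/2))) = 2^(-γ)/n := by
        rw [sq_rpow_half_neg (by positivity : (0:ℝ) ≤ 2*ρ^2) γ,
          Real.mul_rpow (by norm_num : (0:ℝ) ≤ 2) (sq_nonneg ρ), hsq2γ,
          ← Real.rpow_natCast ρ n]
        linear_combination ((2:ℝ)^(-γ)/n) * hcomb
      have hstep : 2^(-γ)/n ≤ ρ^(2*γ-(n:ℝ)) * ∫ r in (0:ℝ)..(3*T), g r := by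
        have := mul_le_mul_of_nonneg_left (le_trans (le_of_eq hintA.symm)
          (le_trans hmonoA hlow)) (Real.rpow_nonneg hρ.le (2*γ-(n:ℝ)))
        calc (2:ℝ)^(-γ)/n = ρ^(2*γ-(n:ℝ)) * (ρ^n/n * ((2*ρ^2)^2)^(-(γ/2))) := hvalA.symm
          _ ≤ _ := this
      have hm1 : min ((2:ℝ)^(1-2*γ)/n) ((2:ℝ)^(1-(n:ℝ))*5^(-γ)) * (ρ/z.re)^(γ-1)
          ≤ (2:ℝ)^(1-2*γ)/n * (ρ/z.re)^(γ-1) :=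
        mul_le_mul_of_nonneg_right (min_le_left _ _) hXnn
      have hm2 : (2:ℝ)^(1-2*γ)/n * (ρ/z.re)^(γ-1) ≤ (2:ℝ)^(1-2*γ)/n * 2^(γ-1) :=
        mul_le_mul_of_nonneg_left hXle (by positivity)
      have hm3 : (2:ℝ)^(1-2*γ)/n * 2^(γ-1) = 2^(-γ)/n := by
        rw [div_mul_eq_mul_div, ← Real.rpow_add two_pos,
          show 1-2*γ+(γ-1) = -γ from by ring]
      linarith
    · -- case B : z.re small, b large
      have hbge : ρ/2 ≤ b := by nlinarith [hsq, hb, hz, hρ]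
      have hsubT : b + z.re ≤ 3*T := by
        have := hbρ; have := hρa; nlinarith
      have hlow : (∫ r in b..(b+z.re), g r) ≤ ∫ r in (0:ℝ)..(3*T), g r :=
        intervalIntegral.integral_mono_interval hb (by linarith) hsubT hgae (hgint _ _)
      have hptB : ∀ r ∈ Set.Icc b (b+z.re),
          (ρ/2)^(n-1) * ((5*z.re*ρ)^2)^(-(γ/2)) ≤ g r := by
        intro r hr
        simp only [hgdef]
        have hr1 : b ≤ r := hr.1
        have hr2 : r ≤ b + z.re := hr.2
        have h1 : (ρ/2)^(n-1) ≤ r^(n-1) :=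
          pow_le_pow_left₀ (by positivity) (by linarith) _
        have h2 : ((5*z.re*ρ)^2)^(-(γ/2))
            ≤ (((r-b)^2+z.re^2) * ((r+b)^2+z.re^2))^(-(γ/2)) := by
          apply Real.rpow_le_rpow_of_nonpos (hEpos r) ?_ (by linarith)
          have e1 : (r-b)^2 + z.re^2 ≤ 2*z.re^2 := by nlinarith
          have e2 : (r+b)^2 + z.re^2 ≤ 10*ρ^2 := by nlinarith
          have e3 := mul_le_mul e1 e2 (by positivity) (by positivity)
          nlinarith [e3, mul_nonneg (mul_nonneg hz.le hz.le) (mul_nonneg hρ.le hρ.le)]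
        exact mul_le_mul h1 h2 (Real.rpow_nonneg (by positivity) _)
          (pow_nonneg (by linarith) _)
      have hmonoB : (∫ r in b..(b+z.re), ((ρ/2)^(n-1) * ((5*z.re*ρ)^2)^(-(γ/2)) : ℝ))
          ≤ ∫ r in b..(b+z.re), g r :=
        intervalIntegral.integral_mono_on (by linarith) intervalIntegrable_const
          (hgint _ _) hptB
      have hintB : (∫ r in b..(b+z.re), ((ρ/2)^(n-1) * ((5*z.re*ρ)^2)^(-(γ/2)) : ℝ))
          = z.re * ((ρ/2)^(n-1) * ((5*z.re*ρ)^2)^(-(γ/2))) := by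
        rw [intervalIntegral.integral_const, show b+z.re-b = z.re from by ring, smul_eq_mul]
      have q1 : ρ^(2*γ-(n:ℝ)) * ρ^((n:ℝ)-1) * ρ^(-γ) = ρ^(γ-1) := by
        rw [← Real.rpow_add hρ, ← Real.rpow_add hρ]; congr 1 <;> ring
      have q2 : z.re * z.re^(-γ) = z.re^(1-γ) := by
        nth_rewrite 1 [← Real.rpow_one z.re]
        rw [← Real.rpow_add hz]; congr 1 <;> ring
      have q3 : (2:ℝ)^(1-(n:ℝ)) * 2^((n:ℝ)-1) = 1 := by
        rw [← Real.rpow_add two_pos, show 1-(n:ℝ)+((n:ℝ)-1) = 0 from by ring, Real.rpow_zero]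
      have h2n : (0:ℝ) < (2:ℝ)^((n:ℝ)-1) := Real.rpow_pos_of_pos two_pos _
      have hvalB : ρ^(2*γ-(n:ℝ)) * (z.re * ((ρ/2)^(n-1) * ((5*z.re*ρ)^2)^(-(γ/2))))
          = 2^(1-(n:ℝ)) * 5^(-γ) * (ρ/z.re)^(γ-1) := by
        rw [sq_rpow_half_neg (by positivity) γ,
          Real.mul_rpow (by positivity) hρ.le,
          Real.mul_rpow (by norm_num : (0:ℝ) ≤ 5) hz.le,
          div_pow, natpow_cast_sub_one hρ.le hn,
          natpow_cast_sub_one (by norm_num : (0:ℝ) ≤ 2) hn, hXeq]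
        calc ρ^(2*γ-(n:ℝ)) * (z.re * (ρ^((n:ℝ)-1)/2^((n:ℝ)-1) * (5^(-γ) * z.re^(-γ) * ρ^(-γ))))
            = (ρ^(2*γ-(n:ℝ)) * ρ^((n:ℝ)-1) * ρ^(-γ)) * (z.re * z.re^(-γ)) * 5^(-γ)
              / 2^((n:ℝ)-1) := by ring
          _ = ρ^(γ-1) * z.re^(1-γ) * 5^(-γ) / 2^((n:ℝ)-1) := by rw [q1, q2]
          _ = 2^(1-(n:ℝ)) * 5^(-γ) * (ρ^(γ-1) * z.re^(1-γ)) := by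
              rw [div_eq_iff h2n.ne']
              linear_combination (-(ρ^(γ-1) * z.re^(1-γ) * (5:ℝ)^(-γ))) * q3
      have hstep : 2^(1-(n:ℝ)) * 5^(-γ) * (ρ/z.re)^(γ-1)
          ≤ ρ^(2*γ-(n:ℝ)) * ∫ r in (0:ℝ)..(3*T), g r := by
        have := mul_le_mul_of_nonneg_left (le_trans (le_of_eq hintB.symm)
          (le_trans hmonoB hlow)) (Real.rpow_nonneg hρ.le (2*γ-(n:ℝ)))
        calc 2^(1-(n:ℝ)) * 5^(-γ) * (ρ/z.re)^(γ-1)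
            = ρ^(2*γ-(n:ℝ)) * (z.re * ((ρ/2)^(n-1) * ((5*z.re*ρ)^2)^(-(γ/2)))) := hvalB.symm
          _ ≤ _ := this
      have hm1 : min ((2:ℝ)^(1-2*γ)/n) ((2:ℝ)^(1-(n:ℝ))*5^(-γ)) * (ρ/z.re)^(γ-1)
          ≤ (2:ℝ)^(1-(n:ℝ))*5^(-γ) * (ρ/z.re)^(γ-1) :=
        mul_le_mul_of_nonneg_right (min_le_right _ _) hXnn
      linarith
  · -- UPPER BOUND
    have hsplit : (∫ r in (0:ℝ)..(3*T), g r)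
        = (∫ r in (0:ℝ)..(2*ρ), g r) + ∫ r in (2*ρ)..(3*T), g r :=
      (intervalIntegral.integral_add_adjacent_intervals (hgint _ _) (hgint _ _)).symm
    have hbnd1 : ∀ r ∈ Set.Icc (0:ℝ) (2*ρ),
        g r ≤ (2*ρ)^(n-1) * (ρ^(-γ) * (((r-b)^2+z.re^2) ^ (-(γ/2)))) := by
      intro r hr
      simp only [hgdef]
      have hD : 0 < (r-b)^2+z.re^2 := add_pos_of_nonneg_of_pos (sq_nonneg _) (pow_pos hz 2)
      have h1 : r ^ (n-1) ≤ (2*ρ)^(n-1) := pow_le_pow_left₀ hr.1 hr.2 _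
      have h2 : (((r-b)^2+z.re^2) * ((r+b)^2+z.re^2)) ^ (-(γ/2))
          ≤ ρ^(-γ) * ((r-b)^2+z.re^2) ^ (-(γ/2)) := by
        have hle : ρ^2 * ((r-b)^2+z.re^2) ≤ ((r-b)^2+z.re^2) * ((r+b)^2+z.re^2) := by
          have hρ2 : ρ^2 ≤ (r+b)^2+z.re^2 := by nlinarith [hr.1, hb, hsq, mul_nonneg hr.1 hb]
          nlinarith [hD.le, hρ2]
        calc (((r-b)^2+z.re^2) * ((r+b)^2+z.re^2)) ^ (-(γ/2))
            ≤ (ρ^2 * ((r-b)^2+z.re^2)) ^ (-(γ/2)) :=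
              Real.rpow_le_rpow_of_nonpos (mul_pos (pow_pos hρ 2) hD) hle (by linarith)
          _ = ρ^(-γ) * ((r-b)^2+z.re^2) ^ (-(γ/2)) := by
              rw [Real.mul_rpow (sq_nonneg ρ) hD.le, sq_rpow_half_neg hρ.le]
      exact mul_le_mul h1 h2 (Real.rpow_nonneg (hEpos r).le _) (pow_nonneg (by positivity) _)
    have hI1 : (∫ r in (0:ℝ)..(2*ρ), g r)
        ≤ (2*ρ)^(n-1) * (ρ^(-γ) * (2*((1+1/(γ-1)) * z.re^(1-γ)))) := by
      have hcont2 : Continuous fun r : ℝ =>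
          (2*ρ)^(n-1) * (ρ^(-γ) * (((r-b)^2+z.re^2) ^ (-(γ/2)))) := by
        apply Continuous.mul continuous_const
        apply Continuous.mul continuous_const
        apply Continuous.rpow_const (by continuity)
        intro r; left
        exact (add_pos_of_nonneg_of_pos (sq_nonneg _) (pow_pos hz 2)).ne'
      calc (∫ r in (0:ℝ)..(2*ρ), g r)
          ≤ ∫ r in (0:ℝ)..(2*ρ), (2*ρ)^(n-1) * (ρ^(-γ) * (((r-b)^2+z.re^2) ^ (-(γ/2)))) :=
            intervalIntegral.integral_mono_on (by positivity) (hgint _ _)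
              (hcont2.intervalIntegrable _ _) hbnd1
        _ = (2*ρ)^(n-1) * (ρ^(-γ) * ∫ r in (0:ℝ)..(2*ρ), ((r-b)^2+z.re^2) ^ (-(γ/2))) := by
            rw [intervalIntegral.integral_const_mul, intervalIntegral.integral_const_mul]
        _ ≤ (2*ρ)^(n-1) * (ρ^(-γ) * (2*((1+1/(γ-1)) * z.re^(1-γ)))) := by
            have haux := aux3 (γ := γ) (a := z.re) (b := b) (c := 2*ρ) hγ hz hb (by linarith)
            exact mul_le_mul_of_nonneg_left
              (mul_le_mul_of_nonneg_left haux (Real.rpow_nonneg hρ.le _))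
              (pow_nonneg (by positivity) _)
    have hbnd2 : ∀ r ∈ Set.Icc (2*ρ) (3*T), g r ≤ 2^γ * r ^ ((n:ℝ)-1-2*γ) := by
      intro r hr
      have hr0 : 0 < r := lt_of_lt_of_le (by positivity) hr.1
      simp only [hgdef]
      have e1 : (r/2)^2 ≤ (r-b)^2+z.re^2 := by nlinarith [hr.1, hbρ, sq_nonneg z.re]
      have e2 : r^2 ≤ (r+b)^2+z.re^2 := by nlinarith [hb, hr0.le, sq_nonneg z.re, mul_nonneg hr0.le hb]
      have e3 : (r^2/2)^2 ≤ ((r-b)^2+z.re^2) * ((r+b)^2+z.re^2) := by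
        calc (r^2/2)^2 = (r/2)^2 * r^2 := by ring
          _ ≤ ((r-b)^2+z.re^2) * ((r+b)^2+z.re^2) :=
              mul_le_mul e1 e2 (sq_nonneg r) (le_trans (by positivity) e1)
      have e4 : (((r-b)^2+z.re^2) * ((r+b)^2+z.re^2)) ^ (-(γ/2)) ≤ 2^γ * r^(-(2*γ)) := by
        calc (((r-b)^2+z.re^2) * ((r+b)^2+z.re^2)) ^ (-(γ/2))
            ≤ ((r^2/2)^2) ^ (-(γ/2)) :=
              Real.rpow_le_rpow_of_nonpos (by positivity) e3 (by linarith)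
          _ = (r^2/2) ^ (-γ) := sq_rpow_half_neg (by positivity) γ
          _ = 2^γ * r^(-(2*γ)) := rpow_helper1 hr0 γ
      calc r ^ (n-1) * (((r-b)^2+z.re^2) * ((r+b)^2+z.re^2)) ^ (-(γ/2))
          ≤ r ^ (n-1) * (2^γ * r^(-(2*γ))) :=
            mul_le_mul_of_nonneg_left e4 (pow_nonneg hr0.le _)
        _ = 2^γ * (r ^ ((n:ℝ)-1) * r^(-(2*γ))) := by
            rw [natpow_cast_sub_one hr0.le hn]; ring
        _ = 2^γ * r ^ ((n:ℝ)-1-2*γ) := by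
            rw [← Real.rpow_add hr0]; congr 1 <;> ring
    have hI2 : (∫ r in (2*ρ)..(3*T), g r)
        ≤ 2^γ * ((2*ρ) ^ ((n:ℝ)-2*γ) / (2*γ-(n:ℝ))) := by
      have hcont3 : ContinuousOn (fun r : ℝ => 2^γ * r ^ ((n:ℝ)-1-2*γ))
          (Set.uIcc (2*ρ) (3*T)) := by
        apply ContinuousOn.mul continuousOn_const
        apply ContinuousOn.rpow_const continuousOn_id
        intro x hx; left
        rw [Set.uIcc_of_le h2ρ3T] at hx
        exact (lt_of_lt_of_le (by positivity) hx.1).ne'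
      calc (∫ r in (2*ρ)..(3*T), g r)
          ≤ ∫ r in (2*ρ)..(3*T), 2^γ * r ^ ((n:ℝ)-1-2*γ) :=
            intervalIntegral.integral_mono_on h2ρ3T (hgint _ _)
              hcont3.intervalIntegrable hbnd2
        _ = 2^γ * ∫ r in (2*ρ)..(3*T), r ^ ((n:ℝ)-1-2*γ) :=
            intervalIntegral.integral_const_mul _ _
        _ ≤ 2^γ * ((2*ρ) ^ ((n:ℝ)-1-2*γ+1) / (-((n:ℝ)-1-2*γ+1))) :=
            mul_le_mul_of_nonneg_left (aux_tail (by linarith) (by positivity) h2ρ3T)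
              (Real.rpow_nonneg (by norm_num) _)
        _ = 2^γ * ((2*ρ) ^ ((n:ℝ)-2*γ) / (2*γ-(n:ℝ))) := by
            rw [show (n:ℝ)-1-2*γ+1 = (n:ℝ)-2*γ from by ring]
            rw [show -((n:ℝ)-2*γ) = 2*γ-(n:ℝ) from by ring]
    -- combine
    have hT1 : ρ^(2*γ-(n:ℝ)) * ((2*ρ)^(n-1) * (ρ^(-γ) * (2*((1+1/(γ-1)) * z.re^(1-γ)))))
        = 2^(n:ℝ) * (1+1/(γ-1)) * (ρ/z.re)^(γ-1) := by
      have q1 : ρ^(2*γ-(n:ℝ)) * ρ^((n:ℝ)-1) * ρ^(-γ) = ρ^(γ-1) := by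
        rw [← Real.rpow_add hρ, ← Real.rpow_add hρ]; congr 1 <;> ring
      have q2 : (2:ℝ)^((n:ℝ)-1) * 2^(1:ℝ) = 2^(n:ℝ) := by
        rw [← Real.rpow_add two_pos]; congr 1 <;> ring
      rw [hXeq, mul_pow, natpow_cast_sub_one hρ.le hn,
        natpow_cast_sub_one (by norm_num : (0:ℝ) ≤ 2) hn]
      calc ρ^(2*γ-(n:ℝ)) * (2^((n:ℝ)-1) * ρ^((n:ℝ)-1) * (ρ^(-γ) * (2*((1+1/(γ-1)) * z.re^(1-γ)))))
          = (2^((n:ℝ)-1) * 2^(1:ℝ)) * (1+1/(γ-1))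
            * (ρ^(2*γ-(n:ℝ)) * ρ^((n:ℝ)-1) * ρ^(-γ)) * z.re^(1-γ) := by
            rw [Real.rpow_one]; ring
        _ = 2^(n:ℝ) * (1+1/(γ-1)) * ρ^(γ-1) * z.re^(1-γ) := by rw [q1, q2]
        _ = 2^(n:ℝ) * (1+1/(γ-1)) * (ρ^(γ-1) * z.re^(1-γ)) := by ring
    have hT2 : ρ^(2*γ-(n:ℝ)) * (2^γ * ((2*ρ) ^ ((n:ℝ)-2*γ) / (2*γ-(n:ℝ))))
        = 2^((n:ℝ)-γ)/(2*γ-(n:ℝ)) := by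
      rw [Real.mul_rpow (by norm_num : (0:ℝ) ≤ 2) hρ.le]
      have f1 : ρ^(2*γ-(n:ℝ)) * ρ^((n:ℝ)-2*γ) = 1 := by
        rw [← Real.rpow_add hρ, show 2*γ-(n:ℝ)+((n:ℝ)-2*γ) = 0 from by ring, Real.rpow_zero]
      have f2 : (2:ℝ)^γ * 2^((n:ℝ)-2*γ) = 2^((n:ℝ)-γ) := by
        rw [← Real.rpow_add two_pos]; congr 1 <;> ring
      calc ρ^(2*γ-(n:ℝ)) * (2^γ * (2^((n:ℝ)-2*γ) * ρ^((n:ℝ)-2*γ) / (2*γ-(n:ℝ))))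
          = ((2:ℝ)^γ * 2^((n:ℝ)-2*γ)) * (ρ^(2*γ-(n:ℝ)) * ρ^((n:ℝ)-2*γ)) / (2*γ-(n:ℝ)) := by
            ring
        _ = 2^((n:ℝ)-γ)/(2*γ-(n:ℝ)) := by rw [f1, f2]; ring
    have hPnn : 0 ≤ ρ^(2*γ-(n:ℝ)) := Real.rpow_nonneg hρ.le _
    have hA1 : ρ^(2*γ-(n:ℝ)) * (∫ r in (0:ℝ)..(2*ρ), g r)
        ≤ 2^(n:ℝ) * (1+1/(γ-1)) * (ρ/z.re)^(γ-1) := by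
      rw [← hT1]; exact mul_le_mul_of_nonneg_left hI1 hPnn
    have hA2 : ρ^(2*γ-(n:ℝ)) * (∫ r in (2*ρ)..(3*T), g r) ≤ 2^((n:ℝ)-γ)/(2*γ-(n:ℝ)) := by
      rw [← hT2]; exact mul_le_mul_of_nonneg_left hI2 hPnn
    have hA3 : (0:ℝ) ≤ 2^((n:ℝ)-γ)/(2*γ-(n:ℝ)) :=
      div_nonneg (Real.rpow_nonneg (by norm_num) _) (by linarith)
    have hA5 : (0:ℝ) ≤ (2^((n:ℝ)-γ)/(2*γ-(n:ℝ))) * ((ρ/z.re)^(γ-1) - 1) :=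
      mul_nonneg hA3 (by linarith)
    rw [hsplit, mul_add]
    nlinarith [hA1, hA2, hA5]

/-- For integers `n ≥ 1` and reals `γ > 1` with `n < 2γ`, there are
`0 < c ≤ C` (depending only on `n, γ`) such that for every `T > 0` and `z ∈ ℂ` with
`Re z > 0` and `|z| ≤ T`:
`c·(|z|/Re z)^{γ−1} ≤ |z|^{2γ−n} ∫₀^{3T} r^{n−1}|r²+z²|^{−γ} dr ≤ C·(|z|/Re z)^{γ−1}`. -/
theorem stmt12 (n : ℕ) (hn : 1 ≤ n) (γ : ℝ) (hγ : 1 < γ) (hn2 : (n : ℝ) < 2 * γ) :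
    ∃ c C : ℝ, 0 < c ∧ c ≤ C ∧ ∀ T : ℝ, 0 < T → ∀ z : ℂ, 0 < z.re →
      ‖z‖ ≤ T →
      c * (‖z‖ / z.re) ^ (γ - 1) ≤
          ‖z‖ ^ (2 * γ - (n : ℝ)) *
            ∫ r in (0 : ℝ)..(3 * T),
              r ^ (n - 1) * ‖(r : ℂ) ^ 2 + z ^ 2‖ ^ (-γ) ∧
        ‖z‖ ^ (2 * γ - (n : ℝ)) *
            (∫ r in (0 : ℝ)..(3 * T),
              r ^ (n - 1) * ‖(r : ℂ) ^ 2 + z ^ 2‖ ^ (-γ)) ≤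
          C * (‖z‖ / z.re) ^ (γ - 1) := by
  have hγ1 : (0:ℝ) < γ - 1 := by linarith
  have hnR : (0:ℝ) < n := by exact_mod_cast hn
  refine ⟨min ((2:ℝ)^(1-2*γ)/n) ((2:ℝ)^(1-(n:ℝ))*5^(-γ)),
    ((2:ℝ)^(n:ℝ)*(1+1/(γ-1)) + (2:ℝ)^((n:ℝ)-γ)/(2*γ-(n:ℝ)))
      + min ((2:ℝ)^(1-2*γ)/n) ((2:ℝ)^(1-(n:ℝ))*5^(-γ)), ?_, ?_, ?_⟩
  · exact lt_min (div_pos (Real.rpow_pos_of_pos two_pos _) hnR)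
      (mul_pos (Real.rpow_pos_of_pos two_pos _) (Real.rpow_pos_of_pos (by norm_num) _))
  · have h1 : 0 < (2:ℝ)^(n:ℝ)*(1+1/(γ-1)) :=
      mul_pos (Real.rpow_pos_of_pos two_pos _)
        (by have := one_div_pos.mpr hγ1; linarith)
    have h2 : (0:ℝ) ≤ (2:ℝ)^((n:ℝ)-γ)/(2*γ-(n:ℝ)) :=
      div_nonneg (Real.rpow_nonneg (by norm_num) _) (by linarith)
    linarith
  · intro T hT z hz hzT
    obtain ⟨hl, hu⟩ := core n hn γ hγ hn2 T hT z hz hzT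
    refine ⟨hl, le_trans hu ?_⟩
    have hXnn : 0 ≤ (‖z‖ / z.re) ^ (γ-1) := Real.rpow_nonneg (by positivity) _
    have hcnn : 0 ≤ min ((2:ℝ)^(1-2*γ)/n) ((2:ℝ)^(1-(n:ℝ))*5^(-γ)) :=
      le_min (by positivity) (by positivity)
    nlinarith [mul_nonneg hcnn hXnn]
end

section
/- Let n > 2 be an integer and γ = 1. Then there exist constants 0 < c ≤ C, depending only on n, such that for every T > 0 and every z ∈ ℂ with Re z > 0 and |z| ≤ T: c·((T/|z|)^{n−2} + log(|z|/Re z)) ≤ |z|^{2−n} · ∫₀^{3T} r^{n−1} · |r² + z²|^{−1} dr ≤ C·((T/|z|)^{n−2} + log(|z|/Re z)). -/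
open MeasureTheory


lemma keyA (z : ℂ) (hx : 0 < z.re) (r : ℝ) :
    z.re * ‖z‖ ≤ ‖(r:ℂ)^2 + z^2‖ := by
  have hns : Complex.normSq ((r:ℂ)^2 + z^2)
      = (r^2 + z.re^2 - z.im^2)^2 + (2*z.re*z.im)^2 := by
    simp [Complex.normSq_apply, Complex.add_re, Complex.add_im, pow_two,
      Complex.mul_re, Complex.mul_im]
    ring
  have h1 : (z.re * ‖z‖)^2 ≤ Complex.normSq ((r:ℂ)^2 + z^2) := by
    rw [hns]
    have habs : ‖z‖^2 = z.re^2 + z.im^2 := by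
      rw [Complex.sq_norm, Complex.normSq_apply]; ring
    rw [mul_pow, habs]
    nlinarith [sq_nonneg (r^2 - z.im^2), sq_nonneg (r*z.re), sq_nonneg (z.re*z.im)]
  have h2 : 0 ≤ z.re * ‖z‖ := by positivity
  rw [Complex.norm_def]
  exact (Real.le_sqrt h2 (Complex.normSq_nonneg _)).mpr h1

lemma keyB (z : ℂ) (r : ℝ) :
    |r^2 - ‖z‖^2| ≤ ‖(r:ℂ)^2 + z^2‖ := by
  have h := abs_norm_sub_norm_le ((r:ℂ)^2) (-z^2)
  have e1 : ‖(r:ℂ)^2‖ = r^2 := by rw [norm_pow, Complex.norm_real, Real.norm_eq_abs, _root_.sq_abs]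
  have e2 : ‖-z^2‖ = ‖z‖^2 := by rw [norm_neg, norm_pow]
  have e3 : (r:ℂ)^2 - (-z^2) = (r:ℂ)^2 + z^2 := by ring
  rw [e1, e2, e3] at h
  exact h

lemma keyC (z : ℂ) (hx : 0 < z.re) (r : ℝ) :
    ‖(r:ℂ)^2 + z^2‖ ≤ |r^2 - ‖z‖^2| + 2 * z.re * ‖z‖ := by
  have h2 : z + (starRingEnd ℂ) z = 2*(z.re:ℂ) := by
    rw [Complex.add_conj]; push_cast; ring
  have h1 : (‖z‖^2 : ℂ) = z * (starRingEnd ℂ) z := by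
    rw [Complex.mul_conj]; norm_cast; rw [Complex.sq_norm]
  have hid : (r:ℂ)^2 + z^2 = ((r^2 - ‖z‖^2 : ℝ) : ℂ) + z * ((2*z.re : ℝ) : ℂ) := by
    push_cast
    rw [h1]
    linear_combination z * h2
  rw [hid]
  calc ‖_‖ ≤ ‖((r^2 - ‖z‖^2 : ℝ) : ℂ)‖
        + ‖z * ((2*z.re : ℝ) : ℂ)‖ := norm_add_le _ _
    _ = |r^2 - ‖z‖^2| + ‖z‖ * |2*z.re| := by
        rw [Complex.norm_real, Real.norm_eq_abs, norm_mul, Complex.norm_real, Real.norm_eq_abs]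
    _ = _ := by
        have h3 : |2*z.re| = 2*z.re := abs_of_pos (by linarith)
        rw [h3]; ring

lemma aux3_s13 (m : ℕ) : 2*m+1 ≤ 3^m := by
  induction m with
  | zero => norm_num
  | succ k ih =>
    calc 2*(k+1)+1 ≤ 3*(2*k+1) := by omega
      _ ≤ 3*3^k := Nat.mul_le_mul_left 3 ih
      _ = 3^(k+1) := by rw [pow_succ]; ring

set_option maxHeartbeats 1600000 in
/-- For integers `n > 2` (case `γ = 1`), there are `0 < c ≤ C` (depending
only on `n`) such that for every `T > 0` and `z ∈ ℂ` with `Re z > 0` and `|z| ≤ T`: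
`c·((T/|z|)^{n−2} + log(|z|/Re z)) ≤ |z|^{2−n} ∫₀^{3T} r^{n−1}|r²+z²|^{−1} dr
  ≤ C·((T/|z|)^{n−2} + log(|z|/Re z))`. -/
theorem stmt13 (n : ℕ) (hn : 2 < n) :
    ∃ c C : ℝ, 0 < c ∧ c ≤ C ∧ ∀ T : ℝ, 0 < T → ∀ z : ℂ, 0 < z.re →
      ‖z‖ ≤ T →
      c * ((T / ‖z‖) ^ (n - 2) + Real.log (‖z‖ / z.re)) ≤
          ‖z‖ ^ ((2 : ℝ) - (n : ℝ)) *
            ∫ r in (0 : ℝ)..(3 * T),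
              r ^ (n - 1) * (‖(r : ℂ) ^ 2 + z ^ 2‖)⁻¹ ∧
        ‖z‖ ^ ((2 : ℝ) - (n : ℝ)) *
            (∫ r in (0 : ℝ)..(3 * T),
              r ^ (n - 1) * (‖(r : ℂ) ^ 2 + z ^ 2‖)⁻¹) ≤
          C * ((T / ‖z‖) ^ (n - 2) + Real.log (‖z‖ / z.re)) := by
  set m := n - 2 with hmdef
  have hm1 : 1 ≤ m := by omega
  refine ⟨1/6, 2 + 2^n + 2*3^m, by norm_num, ?_, ?_⟩
  · have h1 : (0:ℝ) ≤ 2^n := by positivity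
    have h2 : (0:ℝ) ≤ 3^m := by positivity
    linarith
  intro T hT z hx hzT
  set ρ := ‖z‖ with hρdef
  have hxρ : z.re ≤ ρ := Complex.re_le_norm z
  have hρ : 0 < ρ := lt_of_lt_of_le hx hxρ
  set x := z.re with hxdef
  set Y := Real.log (ρ / x) with hYdef
  set F : ℝ → ℝ := fun r => r ^ (n - 1) * (‖(r : ℂ) ^ 2 + z ^ 2‖)⁻¹ with hF
  have hY0 : 0 ≤ Y := Real.log_nonneg (by rw [le_div_iff₀ hx]; linarith)
  have hX1 : (1:ℝ) ≤ (T/ρ)^m := one_le_pow₀ ((one_le_div hρ).mpr hzT)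
  have hρT : ρ ≤ 3*T := by linarith
  have h2ρT : 2*ρ ≤ 3*T := by linarith
  -- continuity & integrability of F
  have habs0 : ∀ r : ℝ, 0 < ‖(r:ℂ)^2 + z^2‖ :=
    fun r => lt_of_lt_of_le (by positivity) (keyA z hx r)
  have hFc : Continuous F := by
    rw [hF]
    exact (continuous_pow _).mul
      ((continuous_norm.comp (by continuity)).inv₀ fun r => (habs0 r).ne')
  have hFi : ∀ a b : ℝ, IntervalIntegrable F volume a b := fun a b => hFc.intervalIntegrable a b
  have hFnn : ∀ r : ℝ, 0 ≤ r → 0 ≤ F r := fun r hr =>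
    mul_nonneg (pow_nonneg hr _) (inv_nonneg.mpr (norm_nonneg _))
  -- splits
  have hsplit1 : ∫ r in (0:ℝ)..(3*T), F r = (∫ r in (0:ℝ)..ρ, F r) + ∫ r in ρ..(3*T), F r :=
    (intervalIntegral.integral_add_adjacent_intervals (hFi 0 ρ) (hFi ρ (3*T))).symm
  have hsplit2 : ∫ r in ρ..(3*T), F r = (∫ r in ρ..(2*ρ), F r) + ∫ r in (2*ρ)..(3*T), F r :=
    (intervalIntegral.integral_add_adjacent_intervals (hFi ρ (2*ρ)) (hFi (2*ρ) (3*T))).symm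
  -- basic log integrals
  have h0uIcc : (0:ℝ) ∉ Set.uIcc x (ρ + x) := by
    rw [Set.uIcc_of_le (by linarith : x ≤ ρ + x)]
    simp only [Set.mem_Icc, not_and]
    intro h; linarith
  have hint1 : ∫ r in (0:ℝ)..ρ, ((ρ + x) - r)⁻¹ = Real.log ((ρ+x)/x) := by
    rw [intervalIntegral.integral_comp_sub_left (fun u : ℝ => u⁻¹) (ρ + x),
      show (ρ+x) - ρ = x by ring, sub_zero, integral_inv h0uIcc]
  have hint2 : ∫ r in ρ..(2*ρ), (r - (ρ - x))⁻¹ = Real.log ((ρ+x)/x) := by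
    rw [intervalIntegral.integral_comp_sub_right (fun u : ℝ => u⁻¹) (ρ - x),
      show ρ - (ρ - x) = x by ring, show 2*ρ - (ρ - x) = ρ + x by ring, integral_inv h0uIcc]
  -- log comparisons
  have hLup : Real.log ((ρ+x)/x) ≤ Y + 1 := by
    have h1 : Real.log ((ρ+x)/x) ≤ Real.log (2*(ρ/x)) := by
      apply Real.log_le_log (by positivity)
      rw [← mul_div_assoc]
      gcongr
      linarith
    have h2 : Real.log (2*(ρ/x)) = Real.log 2 + Y := Real.log_mul two_ne_zero (div_pos hρ hx).ne'
    have h3 : Real.log 2 ≤ 1 := by linarith [Real.log_two_lt_d9]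
    linarith
  have hLlow : Y ≤ Real.log ((ρ+x)/x) := by
    apply Real.log_le_log (by positivity)
    gcongr
    linarith
  -- pointwise bounds
  have hnm1 : n - 1 = m + 1 := by omega
  have hnm3 : n - 1 = (n - 3) + 2 := by omega
  have hU1 : ∀ r ∈ Set.Icc (0:ℝ) ρ, F r ≤ 2*ρ^m * ((ρ + x) - r)⁻¹ := by
    rintro r ⟨hr0, hr1⟩
    have hA0 := habs0 r
    have hD : 0 < (ρ + x) - r := by linarith
    have hb : ρ^2 - r^2 ≤ ‖(r:ℂ)^2 + z^2‖ :=
      le_trans (le_trans (by rw [abs_sub_comm]; exact le_abs_self _) (le_refl _)) (keyB z r)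
    have hxA := keyA z hx r
    have hA2 : ρ * ((ρ + x) - r) / 2 ≤ ‖(r:ℂ)^2 + z^2‖ := by
      nlinarith [mul_nonneg hr0 (sub_nonneg.mpr hr1)]
    calc F r = r^(n-1) * (‖(r:ℂ)^2 + z^2‖)⁻¹ := by rw [hF]
      _ ≤ ρ^(n-1) * (‖(r:ℂ)^2 + z^2‖)⁻¹ :=
          mul_le_mul_of_nonneg_right (pow_le_pow_left₀ hr0 hr1 _) (inv_nonneg.mpr hA0.le)
      _ ≤ ρ^(n-1) * (ρ * ((ρ + x) - r) / 2)⁻¹ :=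
          mul_le_mul_of_nonneg_left (inv_anti₀ (by positivity) hA2) (by positivity)
      _ = 2*ρ^m * ((ρ + x) - r)⁻¹ := by
          rw [hnm1, pow_succ]
          field_simp
  have hU2 : ∀ r ∈ Set.Icc ρ (2*ρ), F r ≤ 2^n*ρ^m * (r - (ρ - x))⁻¹ := by
    rintro r ⟨hr1, hr2⟩
    have hr0 : 0 < r := lt_of_lt_of_le hρ hr1
    have hA0 := habs0 r
    have hD : 0 < r - (ρ - x) := by linarith
    have hb : r^2 - ρ^2 ≤ ‖(r:ℂ)^2 + z^2‖ := le_trans (le_abs_self _) (keyB z r)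
    have hxA := keyA z hx r
    have hA2 : ρ * (r - (ρ - x)) / 2 ≤ ‖(r:ℂ)^2 + z^2‖ := by
      nlinarith [mul_nonneg (sub_nonneg.mpr hr1) (sub_nonneg.mpr hr1)]
    calc F r = r^(n-1) * (‖(r:ℂ)^2 + z^2‖)⁻¹ := by rw [hF]
      _ ≤ (2*ρ)^(n-1) * (‖(r:ℂ)^2 + z^2‖)⁻¹ :=
          mul_le_mul_of_nonneg_right (pow_le_pow_left₀ hr0.le hr2 _) (inv_nonneg.mpr hA0.le)
      _ ≤ (2*ρ)^(n-1) * (ρ * (r - (ρ - x)) / 2)⁻¹ :=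
          mul_le_mul_of_nonneg_left (inv_anti₀ (by positivity) hA2) (by positivity)
      _ = 2^n*ρ^m * (r - (ρ - x))⁻¹ := by
          have hexp : (2*ρ)^(n-1) = 2^(n-1) * ρ^(n-1) := mul_pow 2 ρ (n-1)
          have h2n : (2:ℝ)^n = 2^(n-1)*2 := by
            rw [← pow_succ, show (n-1)+1 = n from by omega]
          have hρn : ρ^(n-1) = ρ^m*ρ := by rw [hnm1, pow_succ]
          rw [hexp, h2n, hρn]
          field_simp
  have hU3 : ∀ r ∈ Set.Icc (2*ρ) (3*T), F r ≤ 2 * r^(n-3) := by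
    rintro r ⟨hr1, hr2⟩
    have hr0 : 0 < r := by linarith
    have hA0 := habs0 r
    have hb : r^2 - ρ^2 ≤ ‖(r:ℂ)^2 + z^2‖ := le_trans (le_abs_self _) (keyB z r)
    have hA2 : r^2/2 ≤ ‖(r:ℂ)^2 + z^2‖ := by
      have hsq : ρ^2 ≤ r^2/4 := by nlinarith
      linarith
    calc F r = r^(n-1) * (‖(r:ℂ)^2 + z^2‖)⁻¹ := by rw [hF]
      _ ≤ r^(n-1) * (r^2/2)⁻¹ :=
          mul_le_mul_of_nonneg_left (inv_anti₀ (by positivity) hA2) (pow_nonneg hr0.le _)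
      _ = 2 * r^(n-3) := by
          rw [hnm3, pow_add]
          field_simp
  have hL1 : ∀ r ∈ Set.Icc ρ (2*ρ), ρ^m/3 * (r - (ρ - x))⁻¹ ≤ F r := by
    rintro r ⟨hr1, hr2⟩
    have hr0 : 0 < r := lt_of_lt_of_le hρ hr1
    have hA0 := habs0 r
    have hD : 0 < r - (ρ - x) := by linarith
    have hup := keyC z hx r
    have habsval : |r^2 - ρ^2| = r^2 - ρ^2 := abs_of_nonneg (by nlinarith)
    have hA2 : ‖(r:ℂ)^2 + z^2‖ ≤ 3*ρ*(r - (ρ - x)) := by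
      rw [habsval] at hup
      nlinarith [mul_nonneg (sub_nonneg.mpr hr1) (show (0:ℝ) ≤ 3*ρ - (r + ρ) by linarith)]
    calc ρ^m/3 * (r - (ρ - x))⁻¹ = ρ^(n-1) * (3*ρ*(r - (ρ - x)))⁻¹ := by
          rw [hnm1, pow_succ]
          field_simp
      _ ≤ r^(n-1) * (3*ρ*(r - (ρ - x)))⁻¹ :=
          mul_le_mul_of_nonneg_right (pow_le_pow_left₀ hρ.le hr1 _) (by positivity)
      _ ≤ r^(n-1) * (‖(r:ℂ)^2 + z^2‖)⁻¹ :=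
          mul_le_mul_of_nonneg_left (inv_anti₀ hA0 hA2) (pow_nonneg hr0.le _)
      _ = F r := by rw [hF]
  have hL2 : ∀ r ∈ Set.Icc ρ (3*T), (1/2) * r^(n-3) ≤ F r := by
    rintro r ⟨hr1, hr2⟩
    have hr0 : 0 < r := lt_of_lt_of_le hρ hr1
    have hA0 := habs0 r
    have hA2 : ‖(r:ℂ)^2 + z^2‖ ≤ 2*r^2 := by
      have h1 : ‖(r:ℂ)^2 + z^2‖ ≤ ‖(r:ℂ)^2‖ + ‖z^2‖ :=
        norm_add_le _ _
      have h2 : ‖(r:ℂ)^2‖ = r^2 := by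
        rw [norm_pow, Complex.norm_real, Real.norm_eq_abs, _root_.sq_abs]
      have h3 : ‖z^2‖ = ρ^2 := by rw [norm_pow]
      have h4 : ρ^2 ≤ r^2 := by nlinarith
      rw [h2, h3] at h1
      linarith
    calc (1/2) * r^(n-3) = r^(n-1) * (2*r^2)⁻¹ := by
          rw [hnm3, pow_add]
          field_simp
      _ ≤ r^(n-1) * (‖(r:ℂ)^2 + z^2‖)⁻¹ :=
          mul_le_mul_of_nonneg_left (inv_anti₀ hA0 hA2) (pow_nonneg hr0.le _)
      _ = F r := by rw [hF]
  -- integrability of comparison functions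
  have hig1 : IntervalIntegrable (fun r : ℝ => 2*ρ^m * ((ρ + x) - r)⁻¹) volume 0 ρ := by
    apply ContinuousOn.intervalIntegrable
    apply ContinuousOn.mul continuousOn_const
    apply ContinuousOn.inv₀ (Continuous.continuousOn (continuous_const.sub continuous_id))
    intro r hr
    rw [Set.uIcc_of_le hρ.le, Set.mem_Icc] at hr
    exact (show (0:ℝ) < (ρ + x) - r by linarith [hr.2]).ne'
  have hig2 : IntervalIntegrable (fun r : ℝ => 2^n*ρ^m * (r - (ρ - x))⁻¹) volume ρ (2*ρ) := by
    apply ContinuousOn.intervalIntegrable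
    apply ContinuousOn.mul continuousOn_const
    apply ContinuousOn.inv₀ (Continuous.continuousOn (continuous_id.sub continuous_const))
    intro r hr
    rw [Set.uIcc_of_le (by linarith : ρ ≤ 2*ρ), Set.mem_Icc] at hr
    exact (show (0:ℝ) < r - (ρ - x) by linarith [hr.1]).ne'
  have hig4 : IntervalIntegrable (fun r : ℝ => ρ^m/3 * (r - (ρ - x))⁻¹) volume ρ (2*ρ) := by
    apply ContinuousOn.intervalIntegrable
    apply ContinuousOn.mul continuousOn_const
    apply ContinuousOn.inv₀ (Continuous.continuousOn (continuous_id.sub continuous_const))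
    intro r hr
    rw [Set.uIcc_of_le (by linarith : ρ ≤ 2*ρ), Set.mem_Icc] at hr
    exact (show (0:ℝ) < r - (ρ - x) by linarith [hr.1]).ne'
  have hig3 : IntervalIntegrable (fun r : ℝ => 2 * r^(n-3)) volume (2*ρ) (3*T) :=
    (continuous_const.mul (continuous_pow _)).intervalIntegrable _ _
  have hig5 : IntervalIntegrable (fun r : ℝ => (1/2) * r^(n-3)) volume ρ (3*T) :=
    (continuous_const.mul (continuous_pow _)).intervalIntegrable _ _
  -- upper bounds for the three pieces
  have hup1 : ∫ r in (0:ℝ)..ρ, F r ≤ 2*ρ^m * Real.log ((ρ+x)/x) := by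
    calc ∫ r in (0:ℝ)..ρ, F r ≤ ∫ r in (0:ℝ)..ρ, 2*ρ^m * ((ρ + x) - r)⁻¹ :=
        intervalIntegral.integral_mono_on hρ.le (hFi 0 ρ) hig1 hU1
      _ = 2*ρ^m * Real.log ((ρ+x)/x) := by
        rw [intervalIntegral.integral_const_mul, hint1]
  have hup2 : ∫ r in ρ..(2*ρ), F r ≤ 2^n*ρ^m * Real.log ((ρ+x)/x) := by
    calc ∫ r in ρ..(2*ρ), F r ≤ ∫ r in ρ..(2*ρ), 2^n*ρ^m * (r - (ρ - x))⁻¹ :=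
        intervalIntegral.integral_mono_on (by linarith) (hFi ρ (2*ρ)) hig2 hU2
      _ = 2^n*ρ^m * Real.log ((ρ+x)/x) := by
        rw [intervalIntegral.integral_const_mul, hint2]
  have hcast : ((n-3:ℕ):ℝ) + 1 = (m:ℝ) := by
    have h : (n-3) + 1 = m := by omega
    exact_mod_cast congrArg (Nat.cast (R := ℝ)) h
  have hk1 : (n-3) + 1 = m := by omega
  have hup3 : ∫ r in (2*ρ)..(3*T), F r ≤ 2*3^m*T^m := by
    calc ∫ r in (2*ρ)..(3*T), F r ≤ ∫ r in (2*ρ)..(3*T), 2 * r^(n-3) :=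
        intervalIntegral.integral_mono_on h2ρT (hFi (2*ρ) (3*T)) hig3 hU3
      _ = 2 * (((3*T)^m - (2*ρ)^m)/(m:ℝ)) := by
        rw [intervalIntegral.integral_const_mul, integral_pow, hk1, hcast]
      _ ≤ 2*3^m*T^m := by
        have hm0 : (1:ℝ) ≤ (m:ℝ) := by exact_mod_cast hm1
        have h1 : ((3*T)^m - (2*ρ)^m)/(m:ℝ) ≤ (3*T)^m - (2*ρ)^m := by
          apply div_le_self _ hm0
          have : (2*ρ)^m ≤ (3*T)^m := pow_le_pow_left₀ (by positivity) (by linarith) m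
          linarith
        have h2 : ((2*ρ):ℝ)^m ≥ 0 := by positivity
        have h3 : ((3*T):ℝ)^m = 3^m*T^m := mul_pow 3 T m
        nlinarith
  -- lower bounds
  have hlow1 : ρ^m/3 * Y ≤ ∫ r in ρ..(2*ρ), F r := by
    calc ρ^m/3 * Y ≤ ρ^m/3 * Real.log ((ρ+x)/x) :=
            mul_le_mul_of_nonneg_left hLlow (by positivity)
      _ = ∫ r in ρ..(2*ρ), ρ^m/3 * (r - (ρ - x))⁻¹ := by
        rw [intervalIntegral.integral_const_mul, hint2]
      _ ≤ ∫ r in ρ..(2*ρ), F r :=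
        intervalIntegral.integral_mono_on (by linarith) hig4 (hFi ρ (2*ρ)) hL1
  have hlow2 : T^m ≤ ∫ r in ρ..(3*T), F r := by
    have ha3 : (2*(m:ℝ)+1) ≤ 3^m := by exact_mod_cast aux3_s13 m
    have hρTm : ρ^m ≤ T^m := pow_le_pow_left₀ hρ.le hzT m
    have hm0 : (0:ℝ) < (m:ℝ) := by exact_mod_cast hm1
    have hkey : 2*(m:ℝ)*T^m ≤ (3*T)^m - ρ^m := by
      rw [mul_pow]
      nlinarith [mul_nonneg (show (0:ℝ) ≤ 3^m - (2*(m:ℝ)+1) by linarith) (pow_nonneg hT.le m)]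
    calc T^m ≤ (1/2) * (((3*T)^m - ρ^m)/(m:ℝ)) := by
            rw [show (1/2) * (((3*T)^m - ρ^m)/(m:ℝ)) = ((3*T)^m - ρ^m)/(2*(m:ℝ)) from by ring,
              le_div_iff₀ (by linarith)]
            linarith
      _ = ∫ r in ρ..(3*T), (1/2) * r^(n-3) := by
        rw [intervalIntegral.integral_const_mul, integral_pow, hk1, hcast]
      _ ≤ ∫ r in ρ..(3*T), F r :=
        intervalIntegral.integral_mono_on hρT hig5 (hFi ρ (3*T)) hL2
  -- nonnegativity of pieces
  have hnn1 : 0 ≤ ∫ r in (0:ℝ)..ρ, F r :=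
    intervalIntegral.integral_nonneg hρ.le (fun u hu => hFnn u hu.1)
  have hnn3 : 0 ≤ ∫ r in (2*ρ)..(3*T), F r :=
    intervalIntegral.integral_nonneg h2ρT (fun u hu => hFnn u (le_trans (by positivity) hu.1))
  -- convert goal
  have hrpow : ρ ^ ((2:ℝ) - (n:ℝ)) = (ρ^m)⁻¹ := by
    rw [show ((2:ℝ) - (n:ℝ)) = -((m:ℕ):ℝ) from by
      rw [hmdef]
      push_cast [Nat.cast_sub (by omega : 2 ≤ n)]
      ring]
    rw [Real.rpow_neg hρ.le, Real.rpow_natCast]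
  have hXT : (T/ρ)^m * ρ^m = T^m := by
    rw [← mul_pow, div_mul_cancel₀ T hρ.ne']
  have hρm : (0:ℝ) < ρ^m := pow_pos hρ m
  rw [hrpow]
  constructor
  · rw [inv_mul_eq_div, le_div_iff₀ hρm]
    have e : 1/6 * ((T/ρ)^m + Y) * ρ^m = 1/6 * T^m + 1/6 * (Y*ρ^m) := by
      rw [← hXT]; ring
    rw [e]
    have i1 : T^m ≤ ∫ r in (0:ℝ)..(3*T), F r := by
      rw [hsplit1]; linarith [hlow2]
    have i2 : ρ^m/3 * Y ≤ ∫ r in (0:ℝ)..(3*T), F r := by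
      rw [hsplit1, hsplit2]
      have := hlow1
      nlinarith [hlow1, hnn1, hnn3]
    nlinarith [i1, i2, hρm, hY0]
  · rw [inv_mul_eq_div, div_le_iff₀ hρm]
    have h1 : 2*ρ^m * Real.log ((ρ+x)/x) ≤ 2*ρ^m*(Y+1) :=
      mul_le_mul_of_nonneg_left hLup (by positivity)
    have h2 : 2^n*ρ^m * Real.log ((ρ+x)/x) ≤ 2^n*ρ^m*(Y+1) :=
      mul_le_mul_of_nonneg_left hLup (by positivity)
    have h3 : (2+2^n)*ρ^m*1 ≤ (2+2^n)*ρ^m*((T/ρ)^m) :=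
      mul_le_mul_of_nonneg_left hX1 (by positivity)
    have h4 : (0:ℝ) ≤ 2*3^m*(ρ^m*Y) := by positivity
    have hTX : 2*3^m*T^m = 2*3^m*((T/ρ)^m*ρ^m) := by rw [hXT]
    rw [hsplit1, hsplit2]
    have htot : (∫ r in (0:ℝ)..ρ, F r) + ((∫ r in ρ..(2*ρ), F r) + ∫ r in (2*ρ)..(3*T), F r)
        ≤ (2+2^n)*ρ^m*(Y+1) + 2*3^m*((T/ρ)^m*ρ^m) := by
      linarith [hup1, hup2, hup3, h1, h2, hTX]
    have hfin : (2+2^n)*ρ^m*(Y+1) + 2*3^m*((T/ρ)^m*ρ^m)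
        ≤ (2+2^n+2*3^m)*((T/ρ)^m+Y)*ρ^m := by
      linarith [h3, h4]
    linarith [htot, hfin]
end

section
/- Let n = 2 and γ = 1. Then there exist constants 0 < c ≤ C such that for every T > 0 and every z ∈ ℂ with Re z > 0 and |z| ≤ T: c·(1 + log(T/Re z)) ≤ ∫₀^{3T} r · |r² + z²|^{−1} dr ≤ C·(1 + log(T/Re z)). -/
open MeasureTheory

set_option maxHeartbeats 1000000

/-- Case `n = 2`, `γ = 1`: there are `0 < c ≤ C` such that for every
`T > 0` and `z ∈ ℂ` with `Re z > 0` and `|z| ≤ T`: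
`c·(1 + log(T/Re z)) ≤ ∫₀^{3T} r·|r²+z²|^{−1} dr ≤ C·(1 + log(T/Re z))`. -/
theorem stmt14 :
    ∃ c C : ℝ, 0 < c ∧ c ≤ C ∧ ∀ T : ℝ, 0 < T → ∀ z : ℂ, 0 < z.re →
      ‖z‖ ≤ T →
      c * (1 + Real.log (T / z.re)) ≤
          (∫ r in (0 : ℝ)..(3 * T), r * ‖(r : ℂ) ^ 2 + z ^ 2‖⁻¹) ∧
        (∫ r in (0 : ℝ)..(3 * T), r * ‖(r : ℂ) ^ 2 + z ^ 2‖⁻¹) ≤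
          C * (1 + Real.log (T / z.re)) := by
  refine ⟨1/12, 5, by norm_num, by norm_num, ?_⟩
  intro T hT z hx hzT
  set x := z.re with hxdef
  set w := |z.im| with hwdef
  have hw0 : 0 ≤ w := abs_nonneg _
  have hxz : x ≤ ‖z‖ := le_trans (le_abs_self _) (Complex.abs_re_le_norm z)
  have hwz : w ≤ ‖z‖ := Complex.abs_im_le_norm z
  have hzxw : ‖z‖ ≤ x + w := by
    have h := Complex.norm_le_abs_re_add_abs_im z
    rwa [abs_of_pos hx] at h
  have hxT : x ≤ T := hxz.trans hzT
  have hwT : w ≤ T := hwz.trans hzT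
  have hz0 : 0 < ‖z‖ := lt_of_lt_of_le hx hxz
  -- key factorization
  have key : ∀ r : ℝ, (‖(r:ℂ)^2 + z^2‖)^2
      = ((r - w)^2 + x^2) * ((r + w)^2 + x^2) := by
    intro r
    have h1 : (‖(r:ℂ)^2 + z^2‖)^2
        = (r^2 + x^2 - z.im^2)^2 + (2*x*z.im)^2 := by
      rw [Complex.sq_norm, Complex.normSq_apply]
      simp only [pow_two, Complex.mul_re, Complex.mul_im, Complex.add_re, Complex.add_im,
        Complex.ofReal_re, Complex.ofReal_im]
      ring
    have h2 : z.im^2 = w^2 := (sq_abs z.im).symm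
    rw [h1]
    linear_combination (z.im^2 + w^2 + 2*x^2 - 2*r^2) * h2
  have hApos : ∀ r : ℝ, 0 < ‖(r:ℂ)^2 + z^2‖ := by
    intro r
    have h := key r
    have h0 : 0 ≤ ‖(r:ℂ)^2 + z^2‖ := norm_nonneg _
    nlinarith [sq_nonneg (r - w), sq_nonneg (r + w), sq_nonneg x,
      mul_pos (mul_pos hx hx) (mul_pos hx hx)]
  -- continuity of the main integrand
  have hfc : Continuous fun r : ℝ => r * (‖(r:ℂ)^2 + z^2‖)⁻¹ := by
    apply continuous_id.mul
    apply Continuous.inv₀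
    · exact continuous_norm.comp (by continuity)
    · exact fun r => (hApos r).ne'
  have hfnn : ∀ r : ℝ, 0 ≤ r → 0 ≤ r * (‖(r:ℂ)^2 + z^2‖)⁻¹ :=
    fun r hr => mul_nonneg hr (inv_nonneg.2 (hApos r).le)
  have hL0 : 0 ≤ Real.log (T / x) :=
    Real.log_nonneg ((one_le_div hx).2 hxT)
  have hLdiv : Real.log (T / x) = Real.log T - Real.log x :=
    Real.log_div hT.ne' hx.ne'
  constructor
  · -- LOWER BOUND
    -- pointwise bound on [|z|, 3T]
    have hlow : ∀ r ∈ Set.Icc (‖z‖) (3*T),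
        (1/3) * (r + (x - w))⁻¹ ≤ r * (‖(r:ℂ)^2 + z^2‖)⁻¹ := by
      intro r hr
      have hrz : ‖z‖ ≤ r := hr.1
      have hr0 : 0 < r := lt_of_lt_of_le hz0 hrz
      have hrw : w ≤ r := hwz.trans hrz
      have hrx : x ≤ r := hxz.trans hrz
      have hd : 0 < r + (x - w) := by linarith
      have hA := hApos r
      have h1 : (r - w)^2 + x^2 ≤ (r + (x - w))^2 := by
        nlinarith [mul_nonneg (sub_nonneg.2 hrw) hx.le]
      have h2 : (r + w)^2 + x^2 ≤ (3*r)^2 := by nlinarith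
      have h3 : (‖(r:ℂ)^2 + z^2‖)^2 ≤ ((3*r) * (r + (x - w)))^2 := by
        rw [key r]
        calc ((r - w)^2 + x^2) * ((r + w)^2 + x^2)
            ≤ (r + (x - w))^2 * (3*r)^2 := by
              apply mul_le_mul h1 h2 (by positivity) (by positivity)
          _ = ((3*r) * (r + (x - w)))^2 := by ring
      have hAle : ‖(r:ℂ)^2 + z^2‖ ≤ (3*r) * (r + (x - w)) := by
        nlinarith [h3, hA, mul_pos (mul_pos (by norm_num : (0:ℝ) < 3) hr0) hd]
      have i1 : ((3*r) * (r + (x - w)))⁻¹ ≤ (‖(r:ℂ)^2 + z^2‖)⁻¹ :=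
        inv_anti₀ hA hAle
      calc (1:ℝ)/3 * (r + (x - w))⁻¹ = r * ((3*r) * (r + (x - w)))⁻¹ := by
            field_simp
        _ ≤ r * (‖(r:ℂ)^2 + z^2‖)⁻¹ :=
            mul_le_mul_of_nonneg_left i1 hr0.le
    have hzT3 : ‖z‖ ≤ 3*T := by linarith
    have hcont1 : ContinuousOn (fun r : ℝ => (1/3) * (r + (x - w))⁻¹)
        (Set.uIcc (‖z‖) (3*T)) := by
      apply ContinuousOn.mul continuousOn_const
      apply ContinuousOn.inv₀ (by fun_prop)
      intro r hr
      rw [Set.uIcc_of_le hzT3] at hr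
      have h1 : ‖z‖ ≤ r := hr.1
      have : (0:ℝ) < r + (x - w) := by linarith
      exact this.ne'
    have hmono : (∫ r in (‖z‖)..(3*T), (1/3) * (r + (x - w))⁻¹)
        ≤ ∫ r in (‖z‖)..(3*T), r * (‖(r:ℂ)^2 + z^2‖)⁻¹ :=
      intervalIntegral.integral_mono_on hzT3 hcont1.intervalIntegrable
        (hfc.intervalIntegrable _ _) hlow
    have hsplit : (∫ r in (0:ℝ)..(3*T), r * (‖(r:ℂ)^2 + z^2‖)⁻¹)
        = (∫ r in (0:ℝ)..(‖z‖), r * (‖(r:ℂ)^2 + z^2‖)⁻¹)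
          + ∫ r in (‖z‖)..(3*T), r * (‖(r:ℂ)^2 + z^2‖)⁻¹ :=
      (intervalIntegral.integral_add_adjacent_intervals
        (hfc.intervalIntegrable _ _) (hfc.intervalIntegrable _ _)).symm
    have hnn : 0 ≤ ∫ r in (0:ℝ)..(‖z‖), r * (‖(r:ℂ)^2 + z^2‖)⁻¹ :=
      intervalIntegral.integral_nonneg hz0.le (fun u hu => hfnn u hu.1)
    -- compute the comparison integral
    have hpos1 : (0:ℝ) < ‖z‖ + (x - w) := by linarith
    have hpos2 : (0:ℝ) < 3*T + (x - w) := by linarith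
    have hcalc : (∫ r in (‖z‖)..(3*T), (1/3) * (r + (x - w))⁻¹)
        = (1/3) * (Real.log (3*T + (x - w)) - Real.log (‖z‖ + (x - w))) := by
      rw [intervalIntegral.integral_const_mul]
      congr 1
      have h6 : (∫ r in (‖z‖)..(3*T), (r + (x - w))⁻¹)
          = ∫ u in (‖z‖ + (x - w))..(3*T + (x - w)), u⁻¹ :=
        intervalIntegral.integral_comp_add_right (fun u => u⁻¹) (x - w)
      rw [h6, integral_inv (Set.notMem_uIcc_of_lt hpos1 hpos2),
        Real.log_div hpos2.ne' hpos1.ne']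
    have hV1 : Real.log T - Real.log (2*x)
        ≤ Real.log (3*T + (x - w)) - Real.log (‖z‖ + (x - w)) := by
      have e1 : Real.log T ≤ Real.log (3*T + (x - w)) := Real.log_le_log hT (by linarith)
      have e2 : Real.log (‖z‖ + (x - w)) ≤ Real.log (2*x) :=
        Real.log_le_log hpos1 (by linarith)
      linarith
    have hV2 : Real.log 2
        ≤ Real.log (3*T + (x - w)) - Real.log (‖z‖ + (x - w)) := by
      have e1 : Real.log (2 * (‖z‖ + (x - w))) ≤ Real.log (3*T + (x - w)) :=
        Real.log_le_log (by linarith) (by linarith)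
      rw [Real.log_mul (by norm_num) hpos1.ne'] at e1
      linarith
    have hlog2x : Real.log (2*x) = Real.log 2 + Real.log x :=
      Real.log_mul (by norm_num) hx.ne'
    have hlog2 := Real.log_two_gt_d9
    rw [hLdiv]
    rw [hsplit]
    linarith [hmono, hcalc, hV1, hV2, hnn, hlog2x, hlog2]
  · -- UPPER BOUND
    have hd0 : ∀ r : ℝ, (0:ℝ) < |r - w| + x := by
      intro r; have := abs_nonneg (r - w); linarith
    have hup : ∀ r ∈ Set.Icc (0:ℝ) (3*T),
        r * (‖(r:ℂ)^2 + z^2‖)⁻¹ ≤ 2 * (|r - w| + x)⁻¹ := by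
      intro r hr
      have hr0 : 0 ≤ r := hr.1
      have hA := hApos r
      have hd := hd0 r
      have hq : 0 < r + w + x := by linarith
      have h1 : (|r - w| + x)^2 ≤ 2 * ((r - w)^2 + x^2) := by
        nlinarith [sq_nonneg (|r - w| - x), sq_abs (r - w)]
      have h2 : (r + w + x)^2 ≤ 2 * ((r + w)^2 + x^2) := by
        nlinarith [sq_nonneg (r + w - x)]
      have h3 : ((|r - w| + x) * (r + w + x))^2 ≤ (2 * ‖(r:ℂ)^2 + z^2‖)^2 := by
        have := mul_le_mul h1 h2 (sq_nonneg _) (by positivity)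
        calc ((|r - w| + x) * (r + w + x))^2 = (|r - w| + x)^2 * (r + w + x)^2 := by ring
          _ ≤ (2*((r - w)^2 + x^2)) * (2*((r + w)^2 + x^2)) := this
          _ = (2 * ‖(r:ℂ)^2 + z^2‖)^2 := by linear_combination (-4) * key r
      have h4 : (|r - w| + x) * (r + w + x) ≤ 2 * ‖(r:ℂ)^2 + z^2‖ := by
        nlinarith [mul_nonneg hd.le hq.le, hA]
      rw [show r * (‖(r:ℂ)^2 + z^2‖)⁻¹ = r / (‖(r:ℂ)^2 + z^2‖) from
          (div_eq_mul_inv _ _).symm,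
        show (2:ℝ) * (|r - w| + x)⁻¹ = 2 / (|r - w| + x) from (div_eq_mul_inv _ _).symm,
        div_le_div_iff₀ hA hd]
      have h5 : r * (|r - w| + x) ≤ (r + w + x) * (|r - w| + x) := by
        apply mul_le_mul_of_nonneg_right (by linarith) hd.le
      nlinarith [h4, h5]
    have hgc : Continuous fun r : ℝ => 2 * (|r - w| + x)⁻¹ := by
      apply continuous_const.mul
      apply Continuous.inv₀
      · continuity
      · exact fun r => (hd0 r).ne'
    have h3T0 : (0:ℝ) ≤ 3*T := by linarith
    have hmono : (∫ r in (0:ℝ)..(3*T), r * (‖(r:ℂ)^2 + z^2‖)⁻¹)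
        ≤ ∫ r in (0:ℝ)..(3*T), 2 * (|r - w| + x)⁻¹ :=
      intervalIntegral.integral_mono_on h3T0 (hfc.intervalIntegrable _ _)
        (hgc.intervalIntegrable _ _) hup
    have hsplitg : (∫ r in (0:ℝ)..(3*T), 2 * (|r - w| + x)⁻¹)
        = (∫ r in (0:ℝ)..w, 2 * (|r - w| + x)⁻¹)
          + ∫ r in w..(3*T), 2 * (|r - w| + x)⁻¹ :=
      (intervalIntegral.integral_add_adjacent_intervals
        (hgc.intervalIntegrable _ _) (hgc.intervalIntegrable _ _)).symm
    have hwx0 : (0:ℝ) < w + x := by linarith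
    have hg1 : (∫ r in (0:ℝ)..w, 2 * (|r - w| + x)⁻¹)
        = 2 * (Real.log (w + x) - Real.log x) := by
      rw [intervalIntegral.integral_congr (g := fun r : ℝ => 2 * ((w + x) - r)⁻¹) ?_]
      · rw [intervalIntegral.integral_const_mul]
        congr 1
        have h6 : (∫ r in (0:ℝ)..w, ((w + x) - r)⁻¹)
            = ∫ u in ((w + x) - w)..((w + x) - 0), u⁻¹ :=
          intervalIntegral.integral_comp_sub_left (fun u => u⁻¹) (w + x)
        rw [h6]
        rw [show (w + x) - w = x by ring, sub_zero,
          integral_inv (Set.notMem_uIcc_of_lt hx hwx0),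
          Real.log_div hwx0.ne' hx.ne']
      · intro r hr
        rw [Set.uIcc_of_le hw0] at hr
        show 2 * (|r - w| + x)⁻¹ = 2 * ((w + x) - r)⁻¹
        rw [abs_of_nonpos (by linarith [hr.2])]
        ring_nf
    have hw3T : w ≤ 3*T := by linarith
    have hpos3 : (0:ℝ) < 3*T + (x - w) := by linarith
    have hg2 : (∫ r in w..(3*T), 2 * (|r - w| + x)⁻¹)
        = 2 * (Real.log (3*T + (x - w)) - Real.log x) := by
      rw [intervalIntegral.integral_congr (g := fun r : ℝ => 2 * (r + (x - w))⁻¹) ?_]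
      · rw [intervalIntegral.integral_const_mul]
        congr 1
        have h6 : (∫ r in w..(3*T), (r + (x - w))⁻¹)
            = ∫ u in (w + (x - w))..(3*T + (x - w)), u⁻¹ :=
          intervalIntegral.integral_comp_add_right (fun u => u⁻¹) (x - w)
        rw [h6, show w + (x - w) = x by ring,
          integral_inv (Set.notMem_uIcc_of_lt hx hpos3),
          Real.log_div hpos3.ne' hx.ne']
      · intro r hr
        rw [Set.uIcc_of_le hw3T] at hr
        show 2 * (|r - w| + x)⁻¹ = 2 * (r + (x - w))⁻¹
        rw [abs_of_nonneg (by linarith [hr.1])]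
        ring_nf
    have e1 : Real.log (w + x) ≤ Real.log (2*T) := Real.log_le_log hwx0 (by linarith)
    have e2 : Real.log (3*T + (x - w)) ≤ Real.log (4*T) := Real.log_le_log hpos3 (by linarith)
    have e3 : Real.log (2*T) = Real.log 2 + Real.log T :=
      Real.log_mul (by norm_num) hT.ne'
    have e4 : Real.log (4*T) = Real.log 4 + Real.log T :=
      Real.log_mul (by norm_num) hT.ne'
    have e5 : Real.log 4 = 2 * Real.log 2 := by
      rw [show (4:ℝ) = 2^2 by norm_num, Real.log_pow]; push_cast; ring
    have hlog2 := Real.log_two_lt_d9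
    rw [hLdiv]
    linarith [hmono, hsplitg, hg1, hg2, e1, e2, e3, e4, e5, hlog2, hL0]
end

section
/- Let n = 1 and γ = 1. Then there exist constants 0 < c ≤ C such that for every T > 0 and every z ∈ ℂ with Re z > 0 and |z| ≤ T: c·(1 + log(|z|/Re z)) ≤ |z| · ∫₀^{3T} |r² + z²|^{−1} dr ≤ C·(1 + log(|z|/Re z)). -/
open MeasureTheory


open MeasureTheory

lemma abs_factor (z : ℂ) (r : ℝ) :
    ‖(r : ℂ) ^ 2 + z ^ 2‖
      = Real.sqrt ((r - |z.im|) ^ 2 + z.re ^ 2) * Real.sqrt ((r + |z.im|) ^ 2 + z.re ^ 2) := by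
  set x := z.re with hx
  set y := z.im with hy
  set w := |y| with hwdef
  have hw : w ^ 2 = y ^ 2 := sq_abs y
  have h1 : (0:ℝ) ≤ (r - w) ^ 2 + x ^ 2 := by positivity
  have h2 : (0:ℝ) ≤ (r + w) ^ 2 + x ^ 2 := by positivity
  rw [← Real.sqrt_mul h1]
  rw [Complex.norm_def, Complex.normSq_apply]
  congr 1
  have hre : ((r : ℂ) ^ 2 + z ^ 2).re = r ^ 2 + (x ^ 2 - y ^ 2) := by
    simp [pow_two, Complex.mul_re]
    try ring
  have him : ((r : ℂ) ^ 2 + z ^ 2).im = 2 * x * y := by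
    simp [pow_two, Complex.mul_im]
    try ring
  rw [hre, him]
  nlinarith [hw]

lemma arsinh_integral {x : ℝ} (hx : 0 < x) (w p q : ℝ) :
    ∫ r in p..q, (Real.sqrt ((r - w) ^ 2 + x ^ 2))⁻¹
      = Real.arsinh ((q - w) / x) - Real.arsinh ((p - w) / x) := by
  have hcont : Continuous fun r : ℝ => (Real.sqrt ((r - w) ^ 2 + x ^ 2))⁻¹ := by
    apply Continuous.inv₀
    · exact (Real.continuous_sqrt.comp (by continuity))
    · intro r
      exact ne_of_gt (Real.sqrt_pos.mpr (by positivity))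
  apply intervalIntegral.integral_eq_sub_of_hasDerivAt
  · intro r _
    have hlin : HasDerivAt (fun r : ℝ => (r - w) / x) (1 / x) r := by
      simpa using ((hasDerivAt_id r).sub_const w).div_const x
    have h := (Real.hasDerivAt_arsinh ((r - w) / x)).comp r hlin
    refine h.congr_deriv ?_
    have hs : Real.sqrt (1 + ((r - w) / x) ^ 2) * x = Real.sqrt ((r - w) ^ 2 + x ^ 2) := by
      rw [← Real.sqrt_sq hx.le, ← Real.sqrt_mul (by positivity)]
      congr 1
      field_simp
      rw [Real.sqrt_sq hx.le]; ring
    rw [← hs]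
    field_simp
  · exact hcont.intervalIntegrable _ _

lemma inv_sq_integral {p q : ℝ} (hp : 0 < p) (hpq : p ≤ q) :
    ∫ r in p..q, 2 * (r ^ 2)⁻¹ = 2 / p - 2 / q := by
  have h : ∀ r ∈ Set.uIcc p q, HasDerivAt (fun r : ℝ => -2 / r) (2 * (r ^ 2)⁻¹) r := by
    intro r hr
    rw [Set.uIcc_of_le hpq] at hr
    have hr0 : r ≠ 0 := ne_of_gt (lt_of_lt_of_le hp hr.1)
    have h2 := (hasDerivAt_inv hr0).const_mul (-2 : ℝ)
    have : (fun y : ℝ => -2 * y⁻¹) = fun r : ℝ => -2 / r := by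
      funext y; rw [div_eq_mul_inv]
    rw [this] at h2
    refine h2.congr_deriv ?_
    ring
  have hint : IntervalIntegrable (fun r : ℝ => 2 * (r ^ 2)⁻¹) MeasureTheory.volume p q := by
    apply ContinuousOn.intervalIntegrable
    apply ContinuousOn.mul continuousOn_const
    apply ContinuousOn.inv₀ (continuous_pow 2).continuousOn
    intro r hr
    rw [Set.uIcc_of_le hpq] at hr
    exact pow_ne_zero 2 (ne_of_gt (lt_of_lt_of_le hp hr.1))
  rw [intervalIntegral.integral_eq_sub_of_hasDerivAt h hint]
  ring

lemma log_lower {u : ℝ} (hu : 1 ≤ u) : 1 + Real.log u ≤ 6 * Real.arsinh (u / 2) := by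
  have hA : Real.log (1 + u / 2) ≤ Real.arsinh (u / 2) := by
    rw [Real.arsinh]
    apply Real.log_le_log (by linarith)
    have : (1:ℝ) ≤ Real.sqrt (1 + (u / 2) ^ 2) := by
      nlinarith [Real.sq_sqrt (show (0:ℝ) ≤ 1 + (u / 2) ^ 2 by positivity),
        Real.sqrt_nonneg (1 + (u / 2) ^ 2)]
    linarith
  have h32 : Real.log (3 / 2) ≤ Real.log (1 + u / 2) :=
    Real.log_le_log (by norm_num) (by linarith)
  have hu2 : Real.log (u / 2) ≤ Real.log (1 + u / 2) :=
    Real.log_le_log (by linarith) (by linarith)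
  have hlogdiv : Real.log (u / 2) = Real.log u - Real.log 2 :=
    Real.log_div (by linarith) (by norm_num)
  have hkey : 1 + Real.log 2 ≤ 5 * Real.log (3 / 2) := by
    have h1 : (1:ℝ) + Real.log 2 = Real.log (Real.exp 1 * 2) := by
      rw [Real.log_mul (Real.exp_ne_zero 1) two_ne_zero, Real.log_exp]
    have h2 : 5 * Real.log (3 / 2) = Real.log ((3 / 2 : ℝ) ^ (5:ℕ)) := by
      rw [Real.log_pow]; push_cast; ring
    rw [h1, h2]
    apply Real.log_le_log (by positivity)
    nlinarith [Real.exp_one_lt_d9]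
  nlinarith [hA, h32, hu2]

lemma log_upper {u : ℝ} (hu : 1 ≤ u) :
    Real.arsinh (2 * u) ≤ Real.log 5 * (1 + Real.log u) := by
  have h1 : Real.arsinh (2 * u) ≤ Real.log (5 * u) := by
    rw [Real.arsinh]
    apply Real.log_le_log (by positivity)
    have : Real.sqrt (1 + (2 * u) ^ 2) ≤ 2 * u + 1 := by
      rw [show 2 * u + 1 = Real.sqrt ((2 * u + 1) ^ 2) by
        rw [Real.sqrt_sq (by linarith)]]
      exact Real.sqrt_le_sqrt (by nlinarith)
    linarith
  have h2 : Real.log (5 * u) = Real.log 5 + Real.log u := by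
    rw [Real.log_mul (by norm_num) (by linarith)]
  have h5 : 1 ≤ Real.log 5 := by
    rw [Real.le_log_iff_exp_le (by norm_num)]
    nlinarith [Real.exp_one_lt_d9]
  have hlu : 0 ≤ Real.log u := Real.log_nonneg hu
  nlinarith


lemma le_sqrt_of_sq_le {t E : ℝ} (ht : 0 ≤ t) (h : t ^ 2 ≤ E) : t ≤ Real.sqrt E := by
  have h2 := Real.sqrt_le_sqrt h
  rwa [Real.sqrt_sq ht] at h2

lemma sqrt_le_of_le_sq {t E : ℝ} (ht : 0 ≤ t) (h : E ≤ t ^ 2) : Real.sqrt E ≤ t := by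
  have h2 := Real.sqrt_le_sqrt h
  rwa [Real.sqrt_sq ht] at h2

set_option maxHeartbeats 1000000 in
theorem stmt15 :
    ∃ c C : ℝ, 0 < c ∧ c ≤ C ∧ ∀ T : ℝ, 0 < T → ∀ z : ℂ, 0 < z.re →
      ‖z‖ ≤ T →
      c * (1 + Real.log (‖z‖ / z.re)) ≤
          ‖z‖ *
            ∫ r in (0 : ℝ)..(3 * T), (‖(r : ℂ) ^ 2 + z ^ 2‖)⁻¹ ∧
        ‖z‖ *
            (∫ r in (0 : ℝ)..(3 * T), (‖(r : ℂ) ^ 2 + z ^ 2‖)⁻¹) ≤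
          C * (1 + Real.log (‖z‖ / z.re)) := by
  have h5 : (1:ℝ) ≤ Real.sqrt 5 := by
    nlinarith [Real.sq_sqrt (show (0:ℝ) ≤ 5 by norm_num), Real.sqrt_nonneg 5]
  have hs5 : (0:ℝ) < Real.sqrt 5 := lt_of_lt_of_le one_pos h5
  have hlog5 : (1:ℝ) ≤ Real.log 5 := by
    rw [Real.le_log_iff_exp_le (by norm_num)]
    nlinarith [Real.exp_one_lt_d9]
  refine ⟨1 / (6 * Real.sqrt 5), 2 * Real.log 5 + 1, by positivity, ?_, ?_⟩
  · have : 1 / (6 * Real.sqrt 5) ≤ 1 := by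
      rw [div_le_one (by positivity)]; linarith
    linarith
  intro T hT z hx hzT
  set x := z.re with hxdef
  set a := ‖z‖ with hadef
  set w := |z.im| with hwdef
  have hxa : x ≤ a := Complex.re_le_norm z
  have hwa : w ≤ a := Complex.abs_im_le_norm z
  have ha : 0 < a := lt_of_lt_of_le hx hxa
  have hw0 : 0 ≤ w := abs_nonneg _
  have haxw : x ^ 2 + w ^ 2 = a ^ 2 := by
    have h1 := Complex.sq_norm z
    rw [Complex.normSq_apply] at h1
    have h2 : w ^ 2 = z.im ^ 2 := sq_abs z.im
    nlinarith
  have hu : 1 ≤ a / x := (one_le_div hx).mpr hxa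
  set L := Real.log (a / x) with hLdef
  have hL : 0 ≤ L := Real.log_nonneg hu
  have hs1 : ∀ r : ℝ, 0 < Real.sqrt ((r - w) ^ 2 + x ^ 2) :=
    fun r => Real.sqrt_pos.mpr (by positivity)
  have hs2 : ∀ r : ℝ, 0 < Real.sqrt ((r + w) ^ 2 + x ^ 2) :=
    fun r => Real.sqrt_pos.mpr (by positivity)
  set F : ℝ → ℝ := fun r =>
    (Real.sqrt ((r - w) ^ 2 + x ^ 2) * Real.sqrt ((r + w) ^ 2 + x ^ 2))⁻¹ with hFdef
  have hFcont : Continuous F := by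
    apply Continuous.inv₀
    · fun_prop
    · intro r; exact ne_of_gt (mul_pos (hs1 r) (hs2 r))
  have hFint : ∀ p q : ℝ, IntervalIntegrable F volume p q :=
    fun p q => hFcont.intervalIntegrable p q
  set G : ℝ → ℝ := fun r => (Real.sqrt ((r - w) ^ 2 + x ^ 2))⁻¹ with hGdef
  have hGcont : Continuous G := by
    apply Continuous.inv₀
    · fun_prop
    · intro r; exact ne_of_gt (hs1 r)
  have hIeq : (∫ r in (0:ℝ)..(3*T), (‖(r:ℂ)^2 + z^2‖)⁻¹)
      = ∫ r in (0:ℝ)..(3*T), F r := by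
    apply intervalIntegral.integral_congr
    intro r _
    simp only [hFdef]
    rw [abs_factor]
  rw [hIeq]
  have h2aT : 2 * a ≤ 3 * T := by linarith
  have haT : a ≤ 3 * T := by linarith
  -- ======================= UPPER BOUND =======================
  have hsplitU : (∫ r in (0:ℝ)..(3*T), F r)
      = (∫ r in (0:ℝ)..(2*a), F r) + ∫ r in (2*a)..(3*T), F r :=
    (intervalIntegral.integral_add_adjacent_intervals (hFint _ _) (hFint _ _)).symm
  have hp1 : (∫ r in (0:ℝ)..(2*a), F r) ≤ ∫ r in (0:ℝ)..(2*a), a⁻¹ * G r := by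
    apply intervalIntegral.integral_mono_on (by linarith) (hFint _ _)
      ((continuous_const.mul hGcont).intervalIntegrable _ _)
    intro r hr
    have h2 : a ≤ Real.sqrt ((r + w) ^ 2 + x ^ 2) := by
      apply le_sqrt_of_sq_le ha.le
      nlinarith [mul_nonneg hr.1 (show (0:ℝ) ≤ r + 2*w by linarith [hr.1])]
    show (Real.sqrt ((r - w) ^ 2 + x ^ 2) * Real.sqrt ((r + w) ^ 2 + x ^ 2))⁻¹
        ≤ a⁻¹ * (Real.sqrt ((r - w) ^ 2 + x ^ 2))⁻¹
    rw [← mul_inv]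
    apply inv_anti₀ (by positivity)
    rw [mul_comm a _]
    exact mul_le_mul_of_nonneg_left h2 (hs1 r).le
  have hp1' : (∫ r in (0:ℝ)..(2*a), a⁻¹ * G r)
      = a⁻¹ * (Real.arsinh ((2*a - w)/x) + Real.arsinh (w/x)) := by
    rw [intervalIntegral.integral_const_mul]
    simp only [hGdef]
    rw [arsinh_integral hx w 0 (2*a)]
    rw [show (0 - w)/x = -(w/x) by ring, Real.arsinh_neg]
    ring
  have hb1 : Real.arsinh ((2*a - w)/x) ≤ Real.arsinh (2*(a/x)) := by
    apply Real.arsinh_le_arsinh.mpr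
    rw [show 2*(a/x) = (2*a)/x by ring]
    exact (div_le_div_iff_of_pos_right hx).mpr (by linarith)
  have hb2 : Real.arsinh (w/x) ≤ Real.arsinh (2*(a/x)) := by
    apply Real.arsinh_le_arsinh.mpr
    rw [show 2*(a/x) = (2*a)/x by ring]
    exact (div_le_div_iff_of_pos_right hx).mpr (by linarith)
  have hint2 : IntervalIntegrable (fun r : ℝ => 2 * (r ^ 2)⁻¹) volume (2*a) (3*T) := by
    apply ContinuousOn.intervalIntegrable
    apply ContinuousOn.mul continuousOn_const
    apply ContinuousOn.inv₀ (continuous_pow 2).continuousOn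
    intro r hr
    rw [Set.uIcc_of_le h2aT] at hr
    exact pow_ne_zero 2 (ne_of_gt (by nlinarith [hr.1]))
  have hp2 : (∫ r in (2*a)..(3*T), F r) ≤ ∫ r in (2*a)..(3*T), 2 * (r ^ 2)⁻¹ := by
    apply intervalIntegral.integral_mono_on h2aT (hFint _ _) hint2
    intro r hr
    have hr1 : 2*a ≤ r := hr.1
    have hrpos : 0 < r := by linarith
    have hA : r/2 ≤ Real.sqrt ((r - w) ^ 2 + x ^ 2) := by
      apply le_sqrt_of_sq_le (by linarith)
      have hrw : r/2 ≤ r - w := by linarith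
      nlinarith [mul_self_le_mul_self (show (0:ℝ) ≤ r/2 by linarith) hrw, sq_nonneg x]
    have hB : r ≤ Real.sqrt ((r + w) ^ 2 + x ^ 2) := by
      apply le_sqrt_of_sq_le hrpos.le
      nlinarith [mul_nonneg hw0 (show (0:ℝ) ≤ 2*r + w by linarith), sq_nonneg x]
    show (Real.sqrt ((r - w) ^ 2 + x ^ 2) * Real.sqrt ((r + w) ^ 2 + x ^ 2))⁻¹
        ≤ 2 * (r ^ 2)⁻¹
    have hstep : (Real.sqrt ((r - w) ^ 2 + x ^ 2) * Real.sqrt ((r + w) ^ 2 + x ^ 2))⁻¹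
        ≤ ((r/2) * r)⁻¹ := by
      apply inv_anti₀ (by positivity)
      exact mul_le_mul hA hB hrpos.le (hs1 r).le
    calc (Real.sqrt ((r - w) ^ 2 + x ^ 2) * Real.sqrt ((r + w) ^ 2 + x ^ 2))⁻¹
        ≤ ((r/2) * r)⁻¹ := hstep
      _ = 2 * (r ^ 2)⁻¹ := by
          rw [show r/2*r = r^2/2 by ring, inv_div, div_eq_mul_inv]
  have hp2' : (∫ r in (2*a)..(3*T), 2 * (r ^ 2)⁻¹) ≤ a⁻¹ := by
    rw [inv_sq_integral (by positivity) h2aT]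
    have h1 : 2/(2*a) = a⁻¹ := by field_simp
    have h2 : 0 ≤ 2/(3*T) := by positivity
    linarith
  have hupper : a * (∫ r in (0:ℝ)..(3*T), F r)
      ≤ (2 * Real.log 5 + 1) * (1 + L) := by
    have hAint : (∫ r in (0:ℝ)..(3*T), F r)
        ≤ a⁻¹ * (2 * Real.arsinh (2*(a/x)) + 1) := by
      rw [hsplitU]
      have h1 : (∫ r in (0:ℝ)..(2*a), F r)
          ≤ a⁻¹ * (2 * Real.arsinh (2*(a/x))) := by
        have := hp1' ▸ hp1
        have hmul : a⁻¹ * (Real.arsinh ((2*a - w)/x) + Real.arsinh (w/x))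
            ≤ a⁻¹ * (2 * Real.arsinh (2*(a/x))) := by
          apply mul_le_mul_of_nonneg_left (by linarith) (by positivity)
        linarith
      have h2 : (∫ r in (2*a)..(3*T), F r) ≤ a⁻¹ := le_trans hp2 hp2'
      have : a⁻¹ * (2 * Real.arsinh (2*(a/x)) + 1)
          = a⁻¹ * (2 * Real.arsinh (2*(a/x))) + a⁻¹ := by ring
      linarith
    have hmul2 : a * (∫ r in (0:ℝ)..(3*T), F r)
        ≤ a * (a⁻¹ * (2 * Real.arsinh (2*(a/x)) + 1)) :=
      mul_le_mul_of_nonneg_left hAint ha.le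
    have hcanc : a * (a⁻¹ * (2 * Real.arsinh (2*(a/x)) + 1))
        = 2 * Real.arsinh (2*(a/x)) + 1 := by
      field_simp
    have hlogu := log_upper hu
    rw [← hLdef] at hlogu
    nlinarith [hlogu, hL]
  -- ======================= LOWER BOUND =======================
  have hlower : 1 / (6 * Real.sqrt 5) * (1 + L)
      ≤ a * (∫ r in (0:ℝ)..(3*T), F r) := by
    have hsplitL : (∫ r in (0:ℝ)..(3*T), F r)
        = (∫ r in (0:ℝ)..a, F r) + ∫ r in a..(3*T), F r :=
      (intervalIntegral.integral_add_adjacent_intervals (hFint _ _) (hFint _ _)).symm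
    have htail : 0 ≤ ∫ r in a..(3*T), F r := by
      apply intervalIntegral.integral_nonneg haT
      intro r _
      simp only [hFdef]
      positivity
    have hq1 : (∫ r in (0:ℝ)..a, (Real.sqrt 5 * a)⁻¹ * G r)
        ≤ ∫ r in (0:ℝ)..a, F r := by
      apply intervalIntegral.integral_mono_on ha.le
        ((continuous_const.mul hGcont).intervalIntegrable _ _) (hFint _ _)
      intro r hr
      have hs2b : Real.sqrt ((r + w) ^ 2 + x ^ 2) ≤ Real.sqrt 5 * a := by
        rw [show Real.sqrt 5 * a = Real.sqrt (5 * a ^ 2) by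
          rw [Real.sqrt_mul (by norm_num), Real.sqrt_sq ha.le]]
        apply Real.sqrt_le_sqrt
        nlinarith [mul_self_le_mul_self (show (0:ℝ) ≤ r + w by linarith [hr.1]) (show r + w ≤ 2*a by linarith [hr.2]), mul_self_le_mul_self hx.le hxa]
      show (Real.sqrt 5 * a)⁻¹ * (Real.sqrt ((r - w) ^ 2 + x ^ 2))⁻¹
          ≤ (Real.sqrt ((r - w) ^ 2 + x ^ 2) * Real.sqrt ((r + w) ^ 2 + x ^ 2))⁻¹
      rw [← mul_inv]
      apply inv_anti₀ (mul_pos (hs1 r) (hs2 r))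
      rw [mul_comm (Real.sqrt 5 * a) _]
      exact mul_le_mul_of_nonneg_left hs2b (hs1 r).le
    have hq1' : (∫ r in (0:ℝ)..a, (Real.sqrt 5 * a)⁻¹ * G r)
        = (Real.sqrt 5 * a)⁻¹ * (Real.arsinh ((a - w)/x) + Real.arsinh (w/x)) := by
      rw [intervalIntegral.integral_const_mul]
      simp only [hGdef]
      rw [arsinh_integral hx w 0 a]
      rw [show (0 - w)/x = -(w/x) by ring, Real.arsinh_neg]
      ring
    have hnn : ∀ t : ℝ, 0 ≤ t → 0 ≤ Real.arsinh t := by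
      intro t ht
      rw [← Real.arsinh_zero]
      exact Real.arsinh_le_arsinh.mpr ht
    have hsum : Real.arsinh ((a/x)/2)
        ≤ Real.arsinh ((a - w)/x) + Real.arsinh (w/x) := by
      rcases le_total w (a/2) with h | h
      · have h1 : Real.arsinh ((a/x)/2) ≤ Real.arsinh ((a - w)/x) := by
          apply Real.arsinh_le_arsinh.mpr
          rw [show (a/x)/2 = (a/2)/x by ring]
          exact (div_le_div_iff_of_pos_right hx).mpr (by linarith)
        have h2 := hnn (w/x) (by positivity)
        linarith
      · have h1 : Real.arsinh ((a/x)/2) ≤ Real.arsinh (w/x) := by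
          apply Real.arsinh_le_arsinh.mpr
          rw [show (a/x)/2 = (a/2)/x by ring]
          exact (div_le_div_iff_of_pos_right hx).mpr (by linarith)
        have h2 := hnn ((a - w)/x) (div_nonneg (by linarith) hx.le)
        linarith
    have hll := log_lower hu
    rw [← hLdef] at hll
    have hS : (1 + L) / 6 ≤ Real.arsinh ((a - w)/x) + Real.arsinh (w/x) := by
      linarith
    have hchain : (Real.sqrt 5 * a)⁻¹ * ((1 + L) / 6)
        ≤ ∫ r in (0:ℝ)..(3*T), F r := by
      rw [hsplitL]
      have := mul_le_mul_of_nonneg_left hS (show (0:ℝ) ≤ (Real.sqrt 5 * a)⁻¹ by positivity)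
      linarith [hq1, hq1' ▸ hq1]
    have := mul_le_mul_of_nonneg_left hchain ha.le
    have hc : a * ((Real.sqrt 5 * a)⁻¹ * ((1 + L) / 6))
        = 1 / (6 * Real.sqrt 5) * (1 + L) := by
      field_simp
    linarith [hc ▸ this]
  exact ⟨hlower, hupper⟩
end

section
/- Let V be a finite-dimensional real normed vector space, let F : V → ℝ be continuously differentiable, and let k be a natural number. Define U : V → ℝ by U(H) := ∫₀¹ s^k · F(sH) ds. Then U is differentiable and satisfies the Euler-type identity (k+1)·U(H) + DU(H)[H] = F(H) for every H ∈ V, where DU(H)[H] denotes the Fréchet derivative of U at H applied to the vector H. (This shows that the integral formula U_{k+1}(H) = ∫₀¹ s^k [Δ + ω(sH)]U_k(sH) ds solves the transport recursion [(k+1) + ∂_H]U_{k+1}(H) = [Δ + ω(H)]U_k(H) for the Hadamard coefficients, upon taking F(H) = [Δ + ω(H)]U_k(H).) -/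
open MeasureTheory Metric intervalIntegral

section aux
variable {V : Type*} [NormedAddCommGroup V] [NormedSpace ℝ V]
    [FiniteDimensional ℝ V]

lemma aux_hasFDerivAt (F : V → ℝ) (hF : ContDiff ℝ 1 F) (k : ℕ) (H₀ : V) :
    HasFDerivAt (fun H : V => ∫ s in (0 : ℝ)..1, s ^ k * F (s • H))
      (∫ s in (0 : ℝ)..1, s ^ (k + 1) • fderiv ℝ F (s • H₀)) H₀ := by
  have hFd : Differentiable ℝ F := hF.differentiable one_ne_zero
  have hfc : Continuous fun x => fderiv ℝ F x := hF.continuous_fderiv one_ne_zero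
  -- bound on the compact ball
  obtain ⟨C, hC⟩ : ∃ C, ∀ x ∈ closedBall (0 : V) (‖H₀‖ + 1), ‖fderiv ℝ F x‖ ≤ C := by
    obtain ⟨C, hC⟩ := (isCompact_closedBall (0 : V) (‖H₀‖ + 1)).exists_bound_of_continuousOn
      (hfc.norm.continuousOn)
    exact ⟨C, fun x hx => by simpa using hC x hx⟩
  have key := intervalIntegral.hasFDerivAt_integral_of_dominated_of_fderiv_le
    (μ := volume) (a := (0:ℝ)) (b := 1) (s := ball H₀ 1)
    (F := fun (H : V) (s : ℝ) => s ^ k * F (s • H))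
    (F' := fun (H : V) (s : ℝ) => s ^ (k + 1) • fderiv ℝ F (s • H))
    (x₀ := H₀) (bound := fun _ => C) (ball_mem_nhds H₀ one_pos)
    ?_ ?_ ?_ ?_ ?_ ?_
  · exact key
  · filter_upwards with x
    exact (Continuous.mul (continuous_pow k)
      (hF.continuous.comp (continuous_id.smul continuous_const))).aestronglyMeasurable
  · exact (Continuous.mul (continuous_pow k)
      (hF.continuous.comp (continuous_id.smul continuous_const))).intervalIntegrable 0 1
  · exact (Continuous.smul (continuous_pow (k+1))
      (hfc.comp (continuous_id.smul continuous_const))).aestronglyMeasurable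
  · filter_upwards with s hs x hx
    have hs' : s ∈ Set.Ioc (0:ℝ) 1 := by
      simpa [Set.uIoc_of_le (zero_le_one (α := ℝ))] using hs
    have h1 : ‖s ^ (k+1) • fderiv ℝ F (s • x)‖ ≤ ‖fderiv ℝ F (s • x)‖ := by
      rw [norm_smul]
      have : ‖s ^ (k+1)‖ ≤ 1 := by
        rw [Real.norm_eq_abs, abs_pow]
        exact pow_le_one₀ (abs_nonneg s) (abs_le.2 ⟨by linarith [hs'.1], hs'.2⟩)
      nlinarith [norm_nonneg (fderiv ℝ F (s • x))]
    refine h1.trans (hC _ ?_)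
    rw [mem_closedBall, dist_zero_right, norm_smul]
    have hxb : ‖x‖ ≤ ‖H₀‖ + 1 := by
      have := mem_ball_iff_norm.1 hx
      calc ‖x‖ = ‖H₀ + (x - H₀)‖ := by rw [add_sub_cancel]
        _ ≤ ‖H₀‖ + ‖x - H₀‖ := norm_add_le _ _
        _ ≤ ‖H₀‖ + 1 := by
            have : ‖x - H₀‖ ≤ 1 := le_of_lt (by simpa [dist_eq_norm] using hx)
            linarith
    have : ‖s‖ ≤ 1 := by
      rw [Real.norm_eq_abs]; exact abs_le.2 ⟨by linarith [hs'.1], hs'.2⟩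
    nlinarith [norm_nonneg x, norm_nonneg s, abs_nonneg s]
  · exact intervalIntegrable_const
  · filter_upwards with s _ x _
    have hL : HasFDerivAt (fun H : V => s • H) (s • ContinuousLinearMap.id ℝ V) x := by
      exact (hasFDerivAt_id x).const_smul s
    have h2 : HasFDerivAt (fun H : V => F (s • H))
        ((fderiv ℝ F (s • x)).comp (s • ContinuousLinearMap.id ℝ V)) x :=
      (hFd (s • x)).hasFDerivAt.comp x hL
    have h3 := h2.const_mul (s ^ k)
    refine h3.congr_fderiv ?_
    ext v
    simp [pow_succ, mul_comm, mul_assoc, mul_left_comm]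

end aux

/-- Let `V` be a finite-dimensional real normed space, `F : V → ℝ` be `C¹`,
and `k ∈ ℕ`. Define `U(H) := ∫₀¹ s^k F(sH) ds`. Then `U` is differentiable and
`(k+1)·U(H) + DU(H)[H] = F(H)` for every `H`. -/
theorem stmt18 {V : Type*} [NormedAddCommGroup V] [NormedSpace ℝ V]
    [FiniteDimensional ℝ V] (F : V → ℝ) (hF : ContDiff ℝ 1 F) (k : ℕ) :
    Differentiable ℝ (fun H : V => ∫ s in (0 : ℝ)..1, s ^ k * F (s • H)) ∧
    ∀ H : V,
      ((k : ℝ) + 1) * (∫ s in (0 : ℝ)..1, s ^ k * F (s • H))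
          + fderiv ℝ (fun H' : V => ∫ s in (0 : ℝ)..1, s ^ k * F (s • H')) H H
        = F H := by
  have hFd : Differentiable ℝ F := hF.differentiable one_ne_zero
  have hfc : Continuous fun x => fderiv ℝ F x := hF.continuous_fderiv one_ne_zero
  refine ⟨fun H => (aux_hasFDerivAt F hF k H).differentiableAt, fun H => ?_⟩
  have hU := aux_hasFDerivAt F hF k H
  rw [hU.fderiv]
  have hint : IntervalIntegrable (fun s : ℝ => s ^ (k + 1) • fderiv ℝ F (s • H))
      volume 0 1 :=
    (Continuous.smul (continuous_pow (k+1))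
      (hfc.comp (continuous_id.smul continuous_const))).intervalIntegrable 0 1
  rw [ContinuousLinearMap.intervalIntegral_apply hint H]
  -- FTC
  have hderiv : ∀ s ∈ Set.uIcc (0:ℝ) 1, HasDerivAt (fun s : ℝ => s ^ (k+1) * F (s • H))
      (((k:ℝ)+1) * s ^ k * F (s • H) + s ^ (k+1) * fderiv ℝ F (s • H) H) s := by
    intro s _
    have h1 : HasDerivAt (fun s : ℝ => s • H) H s := by
      simpa using (hasDerivAt_id s).smul_const H
    have h2 : HasDerivAt (fun s : ℝ => F (s • H)) (fderiv ℝ F (s • H) H) s :=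
      (hFd (s • H)).hasFDerivAt.comp_hasDerivAt s h1
    have h3 : HasDerivAt (fun s : ℝ => s ^ (k+1)) (((k:ℝ)+1) * s ^ k) s := by
      simpa using hasDerivAt_pow (k+1) s
    exact h3.mul h2
  have hcont : IntervalIntegrable
      (fun s : ℝ => ((k:ℝ)+1) * s ^ k * F (s • H) + s ^ (k+1) * fderiv ℝ F (s • H) H)
      volume 0 1 := by
    exact (((continuous_const.mul (continuous_pow k)).mul
      (hF.continuous.comp (continuous_id.smul continuous_const))).add
      ((continuous_pow (k+1)).mul
        ((hfc.comp (continuous_id.smul continuous_const)).clm_apply continuous_const))).intervalIntegrable 0 1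
  have hFTC := intervalIntegral.integral_eq_sub_of_hasDerivAt hderiv hcont
  simp only [one_pow, one_smul, one_mul, zero_pow (Nat.succ_ne_zero k), zero_mul,
    sub_zero] at hFTC
  have h4 : (∫ x in (0:ℝ)..1, (x ^ (k + 1) • fderiv ℝ F (x • H)) H)
      = ∫ x in (0:ℝ)..1, x ^ (k + 1) * (fderiv ℝ F (x • H)) H :=
    intervalIntegral.integral_congr fun s _ => by simp
  have hFc : Continuous F := hF.continuous
  have h5 : IntervalIntegrable (fun y : ℝ => ((k:ℝ)+1) * y^k * F (y • H)) volume 0 1 := by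
    apply Continuous.intervalIntegrable; fun_prop
  have h6 : IntervalIntegrable (fun y : ℝ => y^(k+1) * (fderiv ℝ F (y • H)) H) volume 0 1 := by
    apply Continuous.intervalIntegrable
    exact (continuous_pow (k+1)).mul
      ((hfc.comp (continuous_id.smul continuous_const)).clm_apply continuous_const)
  rw [h4, ← hFTC, intervalIntegral.integral_add h5 h6]
  congr 1
  rw [← intervalIntegral.integral_const_mul]
  exact intervalIntegral.integral_congr fun s _ => by ring
end

section
/- Let d ≥ 3 be an integer. There exists a constant C > 0, depending only on d, such that for every σ ∈ ℂ with 0 ≤ Re σ ≤ (d+1)/2, the constant C_{σ,d} := e^{σ²}/(Γ((d+1)/2 − σ)·Γ(σ)) satisfies |C_{σ,d}| ≤ C · |σ| · |σ − (d+1)/2| · e^{π·|Im σ| − (Im σ)²}. -/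
open Filter Topology

/-- The complex modulus, as an absolute value (compatibility with older Mathlib). -/
noncomputable abbrev Complex.abs : AbsoluteValue ℂ ℝ := NormedField.toAbsoluteValue ℂ

lemma Complex.norm_eq_abs (z : ℂ) : ‖z‖ = Complex.abs z := rfl
lemma Complex.abs_I : Complex.abs Complex.I = 1 := Complex.norm_I
lemma Complex.abs_ofReal (r : ℝ) : Complex.abs (r : ℂ) = |r| := Complex.norm_real r
lemma Complex.abs_conj (z : ℂ) : Complex.abs ((starRingEnd ℂ) z) = Complex.abs z :=
  Complex.norm_conj z
lemma Complex.abs_natCast (n : ℕ) : Complex.abs (n : ℂ) = n := Complex.norm_natCast n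
lemma Complex.abs_exp (z : ℂ) : Complex.abs (Complex.exp z) = Real.exp z.re := Complex.norm_exp z
lemma Complex.abs_cpow_eq_rpow_re_of_pos {x : ℝ} (hx : 0 < x) (y : ℂ) :
    Complex.abs ((x : ℂ) ^ y) = x ^ y.re := Complex.norm_cpow_eq_rpow_re_of_pos hx y
lemma Complex.abs_apply (z : ℂ) : Complex.abs z = Real.sqrt (Complex.normSq z) := rfl
lemma Complex.continuous_abs : Continuous Complex.abs := continuous_norm
lemma Complex.abs_le_abs_re_add_abs_im (z : ℂ) : Complex.abs z ≤ |z.re| + |z.im| :=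
  Complex.norm_le_abs_re_add_abs_im z
lemma Complex.abs_im_le_abs (z : ℂ) : |z.im| ≤ Complex.abs z := Complex.abs_im_le_norm z
@[simp] lemma Complex.abs_two : Complex.abs 2 = 2 := Complex.norm_two

/-- Bound `|sin z| ≤ exp |Im z|`. -/
lemma stmt19_abs_sin_le (z : ℂ) : Complex.abs (Complex.sin z) ≤ Real.exp |z.im| := by
  rw [Complex.sin]
  calc Complex.abs ((Complex.exp (-z * Complex.I) - Complex.exp (z * Complex.I)) * Complex.I / 2)
      = Complex.abs (Complex.exp (-z * Complex.I) - Complex.exp (z * Complex.I)) / 2 := by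
        rw [map_div₀, map_mul, Complex.abs_I, mul_one]
        simp
    _ ≤ (Complex.abs (Complex.exp (-z * Complex.I)) +
          Complex.abs (Complex.exp (z * Complex.I))) / 2 := by
        gcongr
        exact (Complex.abs.sub_le_add _ _)
    _ ≤ Real.exp |z.im| := by
        rw [Complex.abs_exp, Complex.abs_exp]
        have h1 : (-z * Complex.I).re = z.im := by simp
        have h2 : (z * Complex.I).re = -z.im := by simp
        rw [h1, h2]
        have e1 : Real.exp z.im ≤ Real.exp |z.im| := Real.exp_le_exp.2 (le_abs_self _)
        have e2 : Real.exp (-z.im) ≤ Real.exp |z.im| := Real.exp_le_exp.2 (neg_le_abs _)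
        linarith

/-- Gamma shift formula. -/
lemma stmt19_Gamma_shift (m : ℕ) : ∀ (z : ℂ), (∀ j : ℕ, j < m → z + j ≠ 0) →
    Complex.Gamma (z + m) = Complex.Gamma z * ∏ j ∈ Finset.range m, (z + j) := by
  induction m with
  | zero => intro z _; simp
  | succ m ih =>
      intro z hz
      have h1 : z + (m + 1 : ℕ) = (z + m) + 1 := by push_cast; ring
      rw [h1, Complex.Gamma_add_one _ (hz m (Nat.lt_succ_self m)),
        ih z (fun j hj => hz j (hj.trans (Nat.lt_succ_self m))), Finset.prod_range_succ]
      ring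

/-- Formula for `|GammaSeq z n|`. -/
lemma stmt19_abs_GammaSeq (z : ℂ) {n : ℕ} (hn : 0 < n) :
    Complex.abs (Complex.GammaSeq z n) =
      (n : ℝ) ^ z.re * (Nat.factorial n : ℝ) / ∏ j ∈ Finset.range (n + 1), Complex.abs (z + j) := by
  rw [Complex.GammaSeq, map_div₀, map_mul, map_prod]
  congr 2
  · rw [← Complex.ofReal_natCast, Complex.abs_cpow_eq_rpow_re_of_pos (by exact_mod_cast hn)]
  · exact_mod_cast Complex.abs_natCast _


/-- Monotonicity of `|Γ|` along horizontal lines, relative to real values. -/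
lemma stmt19_mono (z : ℂ) (X : ℝ) (hx : 0 < z.re) (hxX : z.re ≤ X) :
    Complex.abs (Complex.Gamma z) * Real.Gamma X ≤
      Real.Gamma z.re * Complex.abs (Complex.Gamma ((X : ℂ) + z.im * Complex.I)) := by
  set x := z.re with hxdef
  set y := z.im with hydef
  set Z : ℂ := (X : ℂ) + y * Complex.I with hZdef
  have hZre : Z.re = X := by simp [hZdef]
  have hZim : Z.im = y := by simp [hZdef]
  have hX : (0:ℝ) < X := lt_of_lt_of_le hx hxX
  -- limits
  have habs : ∀ w : ℂ, Tendsto (fun n => Complex.abs (Complex.GammaSeq w n)) atTop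
      (𝓝 (Complex.abs (Complex.Gamma w))) :=
    fun w => (Complex.continuous_abs.tendsto _).comp (Complex.GammaSeq_tendsto_Gamma w)
  have hu : Tendsto (fun n => Complex.abs (Complex.GammaSeq z n) *
      Complex.abs (Complex.GammaSeq (X : ℂ) n)) atTop
      (𝓝 (Complex.abs (Complex.Gamma z) * Complex.abs (Complex.Gamma (X : ℂ)))) :=
    (habs z).mul (habs (X : ℂ))
  have hv : Tendsto (fun n => Complex.abs (Complex.GammaSeq (x : ℂ) n) *
      Complex.abs (Complex.GammaSeq Z n)) atTop
      (𝓝 (Complex.abs (Complex.Gamma (x : ℂ)) * Complex.abs (Complex.Gamma Z))) :=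
    (habs (x : ℂ)).mul (habs Z)
  have hGX : Complex.abs (Complex.Gamma (X : ℂ)) = Real.Gamma X := by
    rw [Complex.Gamma_ofReal, Complex.abs_ofReal, abs_of_pos (Real.Gamma_pos_of_pos hX)]
  have hGx : Complex.abs (Complex.Gamma (x : ℂ)) = Real.Gamma x := by
    rw [Complex.Gamma_ofReal, Complex.abs_ofReal, abs_of_pos (Real.Gamma_pos_of_pos hx)]
  rw [← hGX, ← hGx]
  refine le_of_tendsto_of_tendsto hu hv ?_
  filter_upwards [eventually_ge_atTop 1] with n hn
  have hn0 : 0 < n := hn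
  rw [stmt19_abs_GammaSeq z hn0, stmt19_abs_GammaSeq (X:ℂ) hn0,
    stmt19_abs_GammaSeq (x:ℂ) hn0, stmt19_abs_GammaSeq Z hn0]
  have hXre : (X:ℂ).re = X := Complex.ofReal_re X
  have hxre : ((x:ℝ):ℂ).re = x := Complex.ofReal_re x
  rw [hXre, hxre, hZre]
  -- convert real-argument products
  have hprodX : ∏ j ∈ Finset.range (n+1), Complex.abs ((X:ℂ) + j) =
      ∏ j ∈ Finset.range (n+1), (X + j) := by
    refine Finset.prod_congr rfl fun j _ => ?_
    rw [show (X:ℂ) + j = ((X + j : ℝ) : ℂ) by push_cast; ring, Complex.abs_ofReal,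
      abs_of_pos (by positivity)]
  have hprodx : ∏ j ∈ Finset.range (n+1), Complex.abs ((x:ℂ) + j) =
      ∏ j ∈ Finset.range (n+1), (x + j) := by
    refine Finset.prod_congr rfl fun j _ => ?_
    rw [show (x:ℂ) + j = ((x + j : ℝ) : ℂ) by push_cast; ring, Complex.abs_ofReal,
      abs_of_pos (by positivity)]
  rw [hprodX, hprodx]
  rw [div_mul_div_comm, div_mul_div_comm]
  have hNnn : 0 ≤ (n : ℝ) ^ x * (Nat.factorial n : ℝ) * ((n : ℝ) ^ X * (Nat.factorial n : ℝ)) := by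
    positivity
  refine div_le_div_of_nonneg_left hNnn ?_ ?_
  · -- 0 < ∏ (x+j) * ∏ |Z+j|
    apply mul_pos
    · exact Finset.prod_pos fun j _ => by positivity
    · exact Finset.prod_pos fun j _ => by
        have : (Z + j) ≠ 0 := by
          intro h
          have := congrArg Complex.re h
          simp [hZdef] at this
          nlinarith [this]
        exact Complex.abs.pos this
  · -- ∏(x+j) * ∏|Z+j| ≤ ∏|z+j| * ∏(X+j)
    rw [← Finset.prod_mul_distrib, ← Finset.prod_mul_distrib]
    refine Finset.prod_le_prod (fun j _ => by positivity) fun j _ => ?_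
    -- (x+j) * |Z+j| ≤ |z+j| * (X+j)
    have hzj : Complex.abs (z + j) = Real.sqrt ((x + j)^2 + y^2) := by
      rw [Complex.abs_apply, Complex.normSq_apply]
      simp only [Complex.add_re, Complex.natCast_re, Complex.add_im, Complex.natCast_im, add_zero,
        hxdef, hydef]
      ring_nf
    have hZj : Complex.abs (Z + j) = Real.sqrt ((X + j)^2 + y^2) := by
      rw [Complex.abs_apply, Complex.normSq_apply]
      simp only [Complex.add_re, Complex.natCast_re, Complex.add_im, Complex.natCast_im, add_zero,
        hZre, hZim]
      ring_nf
    rw [hzj, hZj]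
    have hxj : (0:ℝ) ≤ x + j := by positivity
    have hXj : (0:ℝ) ≤ X + j := by positivity
    calc (x + j) * Real.sqrt ((X + j)^2 + y^2)
        = Real.sqrt ((x+j)^2 * ((X + j)^2 + y^2)) := by
          rw [Real.sqrt_mul (sq_nonneg _), Real.sqrt_sq hxj]
      _ ≤ Real.sqrt (((x+j)^2 + y^2) * (X + j)^2) := by
          apply Real.sqrt_le_sqrt
          nlinarith [sq_nonneg y, mul_self_le_mul_self hxj (show x + (j:ℝ) ≤ X + (j:ℝ) by linarith)]
      _ = Real.sqrt ((x+j)^2 + y^2) * (X + j) := by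
          rw [Real.sqrt_mul (by positivity), Real.sqrt_sq hXj]

/-- Decay of Gamma on the vertical line `Re = 1`. -/
lemma stmt19_Gamma_one_line (y : ℝ) (hy : 1 ≤ |y|) :
    Complex.abs (Complex.Gamma (1 + y * Complex.I)) ≤ 4 * |y| * Real.exp (-(Real.pi * |y|) / 2) := by
  have hy0 : y ≠ 0 := by intro h; rw [h] at hy; simp at hy; linarith
  have hyI : (y : ℂ) * Complex.I ≠ 0 := by
    simp [Complex.ext_iff, hy0]
  have hG1 : Complex.Gamma (1 + y * Complex.I) =
      (y * Complex.I) * Complex.Gamma (y * Complex.I) := by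
    rw [show (1 : ℂ) + y * Complex.I = y * Complex.I + 1 by ring]
    exact Complex.Gamma_add_one _ hyI
  have hrefl := Complex.Gamma_mul_Gamma_one_sub ((y:ℂ) * Complex.I)
  -- conjugation: |Γ(1 - yI)| = |Γ(1 + yI)|
  have hconj : Complex.abs (Complex.Gamma (1 - y * Complex.I)) =
      Complex.abs (Complex.Gamma (1 + y * Complex.I)) := by
    have h1 : (starRingEnd ℂ) (1 + y * Complex.I) = 1 - y * Complex.I := by
      simp [Complex.ext_iff]
    rw [← h1, Complex.Gamma_conj, Complex.abs_conj]
  -- |sin(π y I)| = sinh(π |y|)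
  have hsin : Complex.abs (Complex.sin (Real.pi * ((y:ℂ) * Complex.I))) = Real.sinh (Real.pi * |y|) := by
    have h2 : (Real.pi : ℂ) * ((y:ℂ) * Complex.I) = ((Real.pi * y : ℝ) : ℂ) * Complex.I := by
      push_cast; ring
    rw [h2, Complex.sin_mul_I]
    rw [show Complex.sinh ((Real.pi * y : ℝ) : ℂ) = ((Real.sinh (Real.pi * y) : ℝ) : ℂ) from
      (Complex.ofReal_sinh _).symm]
    rw [map_mul, Complex.abs_I, mul_one, Complex.abs_ofReal]
    rcases hy0.lt_or_gt with h | h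
    · rw [abs_of_neg h]
      rw [show Real.pi * y = -(Real.pi * -y) by ring, Real.sinh_neg,
        abs_neg, abs_of_nonneg (Real.sinh_pos_iff.2 (by nlinarith [Real.pi_pos])).le]
    · rw [abs_of_pos h, abs_of_nonneg (Real.sinh_pos_iff.2 (by nlinarith [Real.pi_pos])).le]
  -- squared modulus identity
  have hsq : Complex.abs (Complex.Gamma (1 + y * Complex.I)) ^ 2 =
      |y| * Real.pi / Real.sinh (Real.pi * |y|) := by
    have : Complex.abs (Complex.Gamma (1 + y * Complex.I)) ^ 2 =
        Complex.abs (Complex.Gamma (1 + y * Complex.I)) *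
        Complex.abs (Complex.Gamma (1 - y * Complex.I)) := by
      rw [hconj]; ring
    rw [this, ← map_mul]
    have hmul : Complex.Gamma (1 + y * Complex.I) * Complex.Gamma (1 - y * Complex.I) =
        (y * Complex.I) * (Real.pi / Complex.sin (Real.pi * ((y:ℂ) * Complex.I))) := by
      rw [hG1, mul_assoc, ← hrefl]
    rw [hmul, map_mul, map_mul, Complex.abs_I, mul_one, Complex.abs_ofReal, map_div₀, hsin,
      Complex.abs_ofReal, abs_of_pos Real.pi_pos]
    ring
  -- sinh lower bound
  have hsinh : Real.exp (Real.pi * |y|) / 4 ≤ Real.sinh (Real.pi * |y|) := by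
    rw [Real.sinh_eq]
    have h1 : Real.exp (-(Real.pi * |y|)) ≤ 1 := by
      rw [Real.exp_le_one_iff]
      nlinarith [Real.pi_pos, abs_nonneg y]
    have h2 : (2:ℝ) ≤ Real.exp (Real.pi * |y|) := by
      have : (2:ℝ) ≤ Real.exp 1 := by
        have := Real.add_one_le_exp 1
        linarith
      calc (2:ℝ) ≤ Real.exp 1 := this
        _ ≤ Real.exp (Real.pi * |y|) := Real.exp_le_exp.2 (by nlinarith [Real.pi_gt_three])
    linarith
  have hsinhpos : 0 < Real.sinh (Real.pi * |y|) := by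
    have : (0:ℝ) < Real.exp (Real.pi * |y|) / 4 := by positivity
    linarith
  -- conclude
  have habs : 0 ≤ Complex.abs (Complex.Gamma (1 + y * Complex.I)) := Complex.abs.nonneg _
  have hb : (0:ℝ) ≤ 4 * |y| * Real.exp (-(Real.pi * |y|) / 2) := by positivity
  refine le_of_pow_le_pow_left₀ two_ne_zero hb ?_
  rw [hsq]
  have hEE : Real.exp (-(Real.pi * |y|) / 2) * Real.exp (-(Real.pi * |y|) / 2) =
      Real.exp (-(Real.pi * |y|)) := by
    rw [← Real.exp_add]; ring_nf
  have hrhs : (4 * |y| * Real.exp (-(Real.pi * |y|) / 2)) ^ 2 =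
      16 * |y|^2 * Real.exp (-(Real.pi * |y|)) := by
    rw [← hEE]; ring
  rw [hrhs]
  rw [div_le_iff₀ hsinhpos]
  have hexp : Real.exp (-(Real.pi * |y|)) * Real.exp (Real.pi * |y|) = 1 := by
    rw [← Real.exp_add]; simp
  calc |y| * Real.pi ≤ 16 * |y|^2 * (Real.exp (-(Real.pi * |y|)) * (Real.exp (Real.pi * |y|) / 4)) := by
        rw [show Real.exp (-(Real.pi * |y|)) * (Real.exp (Real.pi * |y|) / 4) =
          (Real.exp (-(Real.pi * |y|)) * Real.exp (Real.pi * |y|)) / 4 by ring, hexp]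
        nlinarith [Real.pi_lt_d2, abs_nonneg y]
    _ ≤ 16 * |y|^2 * (Real.exp (-(Real.pi * |y|)) * Real.sinh (Real.pi * |y|)) := by
        gcongr
    _ = 16 * |y|^2 * Real.exp (-(Real.pi * |y|)) * Real.sinh (Real.pi * |y|) := by ring

lemma stmt19_prod_fact (d : ℕ) :
    ∏ j ∈ Finset.range d, ((j : ℝ) + 2) = (Nat.factorial (d + 1) : ℝ) := by
  induction d with
  | zero => simp
  | succ d ih =>
      rw [Finset.prod_range_succ, ih, Nat.factorial_succ (d + 1)]
      push_cast; ring

/-- Stirling-type decay of `Γ` on the strip `1 ≤ Re z ≤ d+1`. -/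
lemma stmt19_strip_decay (d : ℕ) :
    ∃ C : ℝ, 0 < C ∧ ∀ z : ℂ, 1 ≤ z.re → z.re ≤ (d : ℝ) + 1 → 1 ≤ |z.im| →
      Complex.abs (Complex.Gamma z) ≤
        C * |z.im| ^ (d + 1) * Real.exp (-(Real.pi * |z.im|) / 2) := by
  have hGd : 0 < Real.Gamma ((d : ℝ) + 1) := Real.Gamma_pos_of_pos (by positivity)
  set Gmax : ℝ := max (Real.Gamma 1) (Real.Gamma ((d : ℝ) + 1)) with hGmax
  have hGmaxpos : 0 < Gmax := lt_of_lt_of_le hGd (le_max_right _ _)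
  refine ⟨Gmax * 4 * (Nat.factorial (d + 1) : ℝ) / Real.Gamma ((d : ℝ) + 1), by positivity, ?_⟩
  intro z h1 h2 hy
  set x := z.re with hxdef
  set y := z.im with hydef
  have hy0 : y ≠ 0 := by intro h; rw [h] at hy; simp at hy; linarith
  -- monotonicity step
  have hmono := stmt19_mono z ((d : ℝ) + 1) (by linarith) h2
  -- bound Real.Gamma x by convexity
  have hconv : Real.Gamma x ≤ Gmax := by
    have hseg : x ∈ segment ℝ (1 : ℝ) ((d : ℝ) + 1) := by
      rw [segment_eq_Icc (by linarith : (1:ℝ) ≤ (d : ℝ) + 1)]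
      exact ⟨h1, h2⟩
    exact Real.convexOn_Gamma.le_on_segment (by norm_num : (1:ℝ) ∈ Set.Ioi (0:ℝ))
      (Set.mem_Ioi.2 (by positivity : (0:ℝ) < (d : ℝ) + 1)) hseg
  -- bound |Γ((d+1) + y I)|
  have hshift : Complex.Gamma ((1 : ℂ) + y * Complex.I + d) =
      Complex.Gamma (1 + y * Complex.I) *
        ∏ j ∈ Finset.range d, (1 + y * Complex.I + j) := by
    refine stmt19_Gamma_shift d _ (fun j hj => ?_)
    intro h
    have := congrArg Complex.im h
    simp at this
    exact hy0 this
  have harg : ((((d : ℝ) + 1) : ℝ) : ℂ) + y * Complex.I = (1 : ℂ) + y * Complex.I + d := by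
    push_cast; ring
  have hprodbd : Complex.abs (∏ j ∈ Finset.range d, (1 + (y:ℂ) * Complex.I + j)) ≤
      (Nat.factorial (d + 1) : ℝ) * |y| ^ d := by
    rw [map_prod]
    calc ∏ j ∈ Finset.range d, Complex.abs (1 + (y:ℂ) * Complex.I + j)
        ≤ ∏ j ∈ Finset.range d, (((j:ℝ) + 2) * |y|) := by
          refine Finset.prod_le_prod (fun j _ => Complex.abs.nonneg _) (fun j _ => ?_)
          have hre : ((1:ℂ) + y * Complex.I + j).re = 1 + j := by simp
          have him : ((1:ℂ) + y * Complex.I + j).im = y := by simp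
          calc Complex.abs (1 + (y:ℂ) * Complex.I + j)
              ≤ |((1:ℂ) + y * Complex.I + j).re| + |((1:ℂ) + y * Complex.I + j).im| :=
                Complex.abs_le_abs_re_add_abs_im _
            _ = (1 + (j:ℝ)) + |y| := by
                rw [hre, him, abs_of_pos (by positivity)]
            _ ≤ ((j:ℝ) + 2) * |y| := by nlinarith [Nat.cast_nonneg (α := ℝ) j]
      _ = (Nat.factorial (d + 1) : ℝ) * |y| ^ d := by
          rw [Finset.prod_mul_distrib, stmt19_prod_fact d, Finset.prod_const,
            Finset.card_range]
  have hline := stmt19_Gamma_one_line y hy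
  have hGD : Complex.abs (Complex.Gamma ((((d : ℝ) + 1) : ℝ) + y * Complex.I)) ≤
      4 * (Nat.factorial (d + 1) : ℝ) * |y| ^ (d + 1) * Real.exp (-(Real.pi * |y|) / 2) := by
    rw [harg, hshift, map_mul]
    calc Complex.abs (Complex.Gamma (1 + y * Complex.I)) *
          Complex.abs (∏ j ∈ Finset.range d, (1 + (y:ℂ) * Complex.I + j))
        ≤ (4 * |y| * Real.exp (-(Real.pi * |y|) / 2)) *
            ((Nat.factorial (d + 1) : ℝ) * |y| ^ d) := by
          refine mul_le_mul hline hprodbd (Complex.abs.nonneg _) (by positivity)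
      _ = 4 * (Nat.factorial (d + 1) : ℝ) * |y| ^ (d + 1) * Real.exp (-(Real.pi * |y|) / 2) := by
          ring
  -- combine
  rw [div_mul_eq_mul_div, div_mul_eq_mul_div, le_div_iff₀ hGd]
  calc Complex.abs (Complex.Gamma z) * Real.Gamma ((d : ℝ) + 1)
      ≤ Real.Gamma x * Complex.abs (Complex.Gamma ((((d : ℝ) + 1) : ℝ) + y * Complex.I)) := hmono
    _ ≤ Gmax * (4 * (Nat.factorial (d + 1) : ℝ) * |y| ^ (d + 1) *
          Real.exp (-(Real.pi * |y|) / 2)) := by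
        refine mul_le_mul hconv hGD (Complex.abs.nonneg _)
          (le_of_lt hGmaxpos)
    _ = Gmax * 4 * (Nat.factorial (d + 1) : ℝ) * |y| ^ (d + 1) *
          Real.exp (-(Real.pi * |y|) / 2) := by ring

/-- Bound for `|Γ(w)|⁻¹` on the strip `1 ≤ Re w ≤ d+1` away from the real axis. -/
lemma stmt19_inv_bound (d : ℕ) :
    ∃ C : ℝ, 0 < C ∧ ∀ w : ℂ, 1 ≤ w.re → w.re ≤ (d : ℝ) + 1 → 1 ≤ |w.im| →
      (Complex.abs (Complex.Gamma w))⁻¹ ≤ C * Real.exp (Real.pi * |w.im| / 2) := by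
  obtain ⟨CL, hCLpos, hL⟩ := stmt19_strip_decay d
  refine ⟨CL / Real.pi, by positivity, ?_⟩
  intro w h1 h2 hy
  set y := w.im with hydef
  have hy0 : y ≠ 0 := by intro h; rw [h] at hy; simp at hy; linarith
  have hypos : 0 < |y| := abs_pos.2 hy0
  have hΓw : Complex.Gamma w ≠ 0 := by
    refine Complex.Gamma_ne_zero (fun m => ?_)
    intro h
    have := congrArg Complex.im h
    simp at this
    exact hy0 this
  have hsin : Complex.sin ((Real.pi : ℂ) * w) ≠ 0 := by
    intro h
    rw [Complex.sin_eq_zero_iff] at h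
    obtain ⟨k, hk⟩ := h
    have := congrArg Complex.im hk
    simp [Real.pi_ne_zero] at this
    exact hy0 this
  set K := d + 1 with hK
  have hshift : Complex.Gamma (1 - w + K) =
      Complex.Gamma (1 - w) * ∏ j ∈ Finset.range K, (1 - w + j) := by
    refine stmt19_Gamma_shift K _ (fun j hj => ?_)
    intro h
    have := congrArg Complex.im h
    simp at this
    exact hy0 this
  have hPne : (∏ j ∈ Finset.range K, ((1:ℂ) - w + j)) ≠ 0 := by
    refine Finset.prod_ne_zero_iff.2 (fun j _ => ?_)
    intro h
    have := congrArg Complex.im h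
    simp at this
    exact hy0 this
  have hPbd : |y| ^ K ≤ Complex.abs (∏ j ∈ Finset.range K, ((1:ℂ) - w + j)) := by
    rw [map_prod]
    calc |y| ^ K = ∏ _j ∈ Finset.range K, |y| := by
          rw [Finset.prod_const, Finset.card_range]
      _ ≤ ∏ j ∈ Finset.range K, Complex.abs ((1:ℂ) - w + j) := by
          refine Finset.prod_le_prod (fun j _ => abs_nonneg y) (fun j _ => ?_)
          have him : ((1:ℂ) - w + j).im = -y := by simp [hydef]
          calc |y| = |((1:ℂ) - w + j).im| := by rw [him, abs_neg]
            _ ≤ Complex.abs ((1:ℂ) - w + j) := Complex.abs_im_le_abs _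
  have hrefl := Complex.Gamma_mul_Gamma_one_sub w
  have hpi : (Real.pi : ℂ) ≠ 0 := by simpa using Real.pi_ne_zero
  have hmul : Complex.Gamma w * (Complex.Gamma (1 - w) * Complex.sin ((Real.pi : ℂ) * w)) =
      (Real.pi : ℂ) := by
    rw [← mul_assoc, hrefl, div_mul_cancel₀ _ hsin]
  have hinv : (Complex.Gamma w)⁻¹ =
      Complex.Gamma (1 - w) * Complex.sin ((Real.pi : ℂ) * w) / (Real.pi : ℂ) := by
    rw [eq_div_iff hpi]
    nth_rewrite 1 [← hmul]
    rw [inv_mul_cancel_left₀ hΓw]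
  have hG1w : Complex.Gamma (1 - w) =
      Complex.Gamma (1 - w + K) / ∏ j ∈ Finset.range K, ((1:ℂ) - w + j) := by
    rw [hshift]
    field_simp
  have hzK : (1 - w + (K:ℂ)).re = 1 - w.re + K := by simp
  have hzKim : (1 - w + (K:ℂ)).im = -y := by simp [hydef]
  have hLK := hL (1 - w + K) (by rw [hzK, hK]; push_cast; linarith)
    (by rw [hzK, hK]; push_cast; linarith) (by rw [hzKim, abs_neg]; exact hy)
  rw [hzKim, abs_neg] at hLK
  have habsG1w : Complex.abs (Complex.Gamma (1 - w)) ≤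
      CL * Real.exp (-(Real.pi * |y|) / 2) := by
    rw [hG1w, map_div₀]
    rw [div_le_iff₀ (lt_of_lt_of_le (by positivity) hPbd)]
    calc Complex.abs (Complex.Gamma (1 - w + K))
        ≤ CL * |y| ^ K * Real.exp (-(Real.pi * |y|) / 2) := hLK
      _ = (CL * Real.exp (-(Real.pi * |y|) / 2)) * |y| ^ K := by ring
      _ ≤ (CL * Real.exp (-(Real.pi * |y|) / 2)) *
            Complex.abs (∏ j ∈ Finset.range K, ((1:ℂ) - w + j)) := by
          refine mul_le_mul_of_nonneg_left hPbd (by positivity)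
  have hsinbd : Complex.abs (Complex.sin ((Real.pi : ℂ) * w)) ≤ Real.exp (Real.pi * |y|) := by
    have him : ((Real.pi : ℂ) * w).im = Real.pi * y := by
      simp [Complex.mul_im, hydef]
    calc Complex.abs (Complex.sin ((Real.pi : ℂ) * w)) ≤ Real.exp |((Real.pi : ℂ) * w).im| :=
          stmt19_abs_sin_le _
      _ = Real.exp (Real.pi * |y|) := by
          rw [him, abs_mul, abs_of_pos Real.pi_pos]
  rw [← map_inv₀, hinv, map_div₀, map_mul, Complex.abs_ofReal, abs_of_pos Real.pi_pos,
    div_mul_eq_mul_div]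
  gcongr ?_ / Real.pi
  calc Complex.abs (Complex.Gamma (1 - w)) * Complex.abs (Complex.sin ((Real.pi : ℂ) * w))
      ≤ (CL * Real.exp (-(Real.pi * |y|) / 2)) * Real.exp (Real.pi * |y|) := by
        refine mul_le_mul habsG1w hsinbd (Complex.abs.nonneg _) (by positivity)
    _ = CL * Real.exp (Real.pi * |y| / 2) := by
        rw [mul_assoc, ← Real.exp_add,
          show -(Real.pi * |y|) / 2 + Real.pi * |y| = Real.pi * |y| / 2 by ring]

/-- Core bound: the entire function `1/(Γ(a+1-σ)Γ(σ+1))` grows at most like `e^{π|Im σ|}`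
on the strip. -/
lemma stmt19_core (d : ℕ) (hd : 3 ≤ d) :
    ∃ C : ℝ, 0 < C ∧ ∀ σ : ℂ, 0 ≤ σ.re → σ.re ≤ ((d : ℝ) + 1) / 2 →
      (Complex.abs (Complex.Gamma (((d : ℂ) + 1) / 2 + 1 - σ)))⁻¹ *
        (Complex.abs (Complex.Gamma (σ + 1)))⁻¹ ≤ C * Real.exp (Real.pi * |σ.im|) := by
  obtain ⟨CR, hCRpos, hR⟩ := stmt19_inv_bound d
  -- compactness bound for |Im σ| ≤ 1
  have hcont : Continuous fun σ : ℂ =>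
      (Complex.Gamma (((d : ℂ) + 1) / 2 + 1 - σ))⁻¹ * (Complex.Gamma (σ + 1))⁻¹ := by
    have h1 : Differentiable ℂ fun σ : ℂ => (Complex.Gamma (((d : ℂ) + 1) / 2 + 1 - σ))⁻¹ :=
      Complex.differentiable_one_div_Gamma.comp ((differentiable_const _).sub differentiable_id)
    have h2 : Differentiable ℂ fun σ : ℂ => (Complex.Gamma (σ + 1))⁻¹ :=
      Complex.differentiable_one_div_Gamma.comp (differentiable_id.add (differentiable_const _))
    exact (h1.mul h2).continuous
  obtain ⟨B, hB⟩ := (isCompact_closedBall (0 : ℂ) ((d : ℝ) + 3)).exists_bound_of_continuousOn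
    hcont.continuousOn
  refine ⟨CR ^ 2 + max B 0 + 1, by positivity, ?_⟩
  intro σ h0 h2
  have hd3 : (3:ℝ) ≤ (d:ℝ) := by exact_mod_cast hd
  have haR : (((d : ℂ) + 1) / 2 + 1 - σ).re = ((d : ℝ) + 1) / 2 + 1 - σ.re := by
    rw [show ((d : ℂ) + 1) / 2 + 1 - σ = (((((d : ℝ) + 1) / 2 : ℝ)) : ℂ) + 1 - σ by
      push_cast; ring]
    simp
  have haI : (((d : ℂ) + 1) / 2 + 1 - σ).im = -σ.im := by
    rw [show ((d : ℂ) + 1) / 2 + 1 - σ = (((((d : ℝ) + 1) / 2 : ℝ)) : ℂ) + 1 - σ by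
      push_cast; ring]
    simp
  rcases le_or_gt 1 |σ.im| with hT | hT
  · -- away from the real axis: use the reflection bound twice
    have hw1 := hR (σ + 1) (by simp; linarith) (by simp; linarith) (by simp [hT])
    have hw2 := hR (((d : ℂ) + 1) / 2 + 1 - σ)
      (by rw [haR]; linarith) (by rw [haR]; linarith) (by rw [haI, abs_neg]; exact hT)
    rw [haI, abs_neg] at hw2
    have him1 : (σ + 1).im = σ.im := by simp
    rw [him1] at hw1
    calc (Complex.abs (Complex.Gamma (((d : ℂ) + 1) / 2 + 1 - σ)))⁻¹ *
          (Complex.abs (Complex.Gamma (σ + 1)))⁻¹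
        ≤ (CR * Real.exp (Real.pi * |σ.im| / 2)) * (CR * Real.exp (Real.pi * |σ.im| / 2)) := by
          refine mul_le_mul hw2 hw1 (by positivity) (by positivity)
      _ = CR ^ 2 * Real.exp (Real.pi * |σ.im|) := by
          rw [show (CR * Real.exp (Real.pi * |σ.im| / 2)) * (CR * Real.exp (Real.pi * |σ.im| / 2))
            = CR ^ 2 * (Real.exp (Real.pi * |σ.im| / 2) * Real.exp (Real.pi * |σ.im| / 2)) by ring,
            ← Real.exp_add, show Real.pi * |σ.im| / 2 + Real.pi * |σ.im| / 2 = Real.pi * |σ.im|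
            by ring]
      _ ≤ (CR ^ 2 + max B 0 + 1) * Real.exp (Real.pi * |σ.im|) := by
          have h := le_max_right B (0:ℝ)
          have hexp : 0 < Real.exp (Real.pi * |σ.im|) := Real.exp_pos _
          nlinarith
  · -- compact region
    have hmem : σ ∈ Metric.closedBall (0 : ℂ) ((d : ℝ) + 3) := by
      rw [Metric.mem_closedBall, Complex.dist_eq, sub_zero]
      calc Complex.abs σ ≤ |σ.re| + |σ.im| := Complex.abs_le_abs_re_add_abs_im _
        _ ≤ ((d : ℝ) + 1) / 2 + 1 := by
            rw [abs_of_nonneg h0]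
            have : (0:ℕ) ≤ d := Nat.zero_le d
            nlinarith [hT.le]
        _ ≤ (d : ℝ) + 3 := by
            have : (0:ℝ) ≤ (d:ℝ) := Nat.cast_nonneg d
            linarith
    have hfB := hB σ hmem
    rw [Complex.norm_eq_abs, map_mul, map_inv₀, map_inv₀] at hfB
    calc (Complex.abs (Complex.Gamma (((d : ℂ) + 1) / 2 + 1 - σ)))⁻¹ *
          (Complex.abs (Complex.Gamma (σ + 1)))⁻¹
        ≤ B := hfB
      _ ≤ (CR ^ 2 + max B 0 + 1) * 1 := by
          have h := le_max_left B (0:ℝ)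
          nlinarith [sq_nonneg CR]
      _ ≤ (CR ^ 2 + max B 0 + 1) * Real.exp (Real.pi * |σ.im|) := by
          have h1 : (1:ℝ) ≤ Real.exp (Real.pi * |σ.im|) := by
            rw [Real.one_le_exp_iff]
            positivity
          have h2 : (0:ℝ) < CR ^ 2 + max B 0 + 1 := by positivity
          nlinarith

/-- Let `d ≥ 3`. There is `C > 0`, depending only on `d`, such that for
every `σ ∈ ℂ` with `0 ≤ Re σ ≤ (d+1)/2`, the constant
`C_{σ,d} := e^{σ²}/(Γ((d+1)/2 − σ)·Γ(σ))` satisfies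
`|C_{σ,d}| ≤ C·|σ|·|σ − (d+1)/2|·e^{π|Im σ| − (Im σ)²}`. -/
theorem stmt19 (d : ℕ) (hd : 3 ≤ d) :
    ∃ C : ℝ, 0 < C ∧ ∀ σ : ℂ, 0 ≤ σ.re → σ.re ≤ ((d : ℝ) + 1) / 2 →
      ‖(Complex.exp (σ ^ 2) /
            (Complex.Gamma (((d : ℂ) + 1) / 2 - σ) * Complex.Gamma σ))‖
        ≤ C * ‖σ‖ * ‖(σ - ((d : ℂ) + 1) / 2)‖ *
            Real.exp (Real.pi * |σ.im| - σ.im ^ 2) := by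
  simp only [Complex.norm_eq_abs]
  obtain ⟨Cc, hCcpos, hcore⟩ := stmt19_core d hd
  set aR : ℝ := ((d : ℝ) + 1) / 2 with haRdef
  refine ⟨Real.exp (aR ^ 2) * Cc, by positivity, ?_⟩
  intro σ h0 h2
  set A : ℂ := ((d : ℂ) + 1) / 2 with hAdef
  have hAc : A = ((aR : ℝ) : ℂ) := by rw [hAdef, haRdef]; push_cast; ring
  have hAre : (A - σ).re = aR - σ.re := by rw [hAc]; simp
  have hAim : (A - σ).im = -σ.im := by rw [hAc]; simp
  by_cases hσ0 : σ = 0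
  · subst hσ0
    simp [Complex.Gamma_zero]
  by_cases hσA : σ = A
  · have hA0 : A - σ = 0 := by rw [hσA]; ring
    rw [hA0]
    simp only [Complex.Gamma_zero, zero_mul, div_zero, map_zero]
    positivity
  -- main case
  have hAσ0 : A - σ ≠ 0 := fun h => hσA (by linear_combination -h)
  have hΓσ : Complex.Gamma σ ≠ 0 := by
    refine Complex.Gamma_ne_zero (fun m => ?_)
    intro h
    have hre := congrArg Complex.re h
    simp at hre
    have hm0 : (m:ℝ) = 0 := by
      have := Nat.cast_nonneg (α := ℝ) m
      linarith
    have : σ = 0 := by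
      rw [h, show (m:ℂ) = ((m:ℝ):ℂ) by push_cast; rfl, hm0]
      simp
    exact hσ0 this
  have hΓAσ : Complex.Gamma (A - σ) ≠ 0 := by
    refine Complex.Gamma_ne_zero (fun m => ?_)
    intro h
    have hre := congrArg Complex.re h
    rw [hAre] at hre
    simp at hre
    have hm0 : (m:ℝ) = 0 := by
      have := Nat.cast_nonneg (α := ℝ) m
      linarith
    have : A - σ = 0 := by
      rw [h, show (m:ℂ) = ((m:ℝ):ℂ) by push_cast; rfl, hm0]
      simp
    exact hAσ0 this
  have hΓs1 : Complex.Gamma (σ + 1) = σ * Complex.Gamma σ := Complex.Gamma_add_one σ hσ0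
  have hΓA1 : Complex.Gamma (A + 1 - σ) = (A - σ) * Complex.Gamma (A - σ) := by
    rw [show A + 1 - σ = (A - σ) + 1 by ring]
    exact Complex.Gamma_add_one _ hAσ0
  have hΓs1ne : Complex.Gamma (σ + 1) ≠ 0 := by
    rw [hΓs1]; exact mul_ne_zero hσ0 hΓσ
  have hΓA1ne : Complex.Gamma (A + 1 - σ) ≠ 0 := by
    rw [hΓA1]; exact mul_ne_zero hAσ0 hΓAσ
  have key : Complex.exp (σ ^ 2) / (Complex.Gamma (A - σ) * Complex.Gamma σ) =
      Complex.exp (σ ^ 2) * σ * (A - σ) *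
        ((Complex.Gamma (A + 1 - σ))⁻¹ * (Complex.Gamma (σ + 1))⁻¹) := by
    rw [hΓA1, hΓs1]
    field_simp
  rw [key]
  simp only [map_mul, map_inv₀]
  have habse : Complex.abs (Complex.exp (σ ^ 2)) = Real.exp (σ.re ^ 2 - σ.im ^ 2) := by
    rw [Complex.abs_exp]
    congr 1
    rw [sq, Complex.mul_re]
    ring
  have hcoreσ := hcore σ h0 h2
  have habsAσ : Complex.abs (A - σ) = Complex.abs (σ - A) := Complex.abs.map_sub A σ
  rw [habse, habsAσ]
  calc Real.exp (σ.re ^ 2 - σ.im ^ 2) * Complex.abs σ * Complex.abs (σ - A) *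
        ((Complex.abs (Complex.Gamma (A + 1 - σ)))⁻¹ * (Complex.abs (Complex.Gamma (σ + 1)))⁻¹)
      ≤ Real.exp (σ.re ^ 2 - σ.im ^ 2) * Complex.abs σ * Complex.abs (σ - A) *
        (Cc * Real.exp (Real.pi * |σ.im|)) := by
        gcongr
    _ ≤ Real.exp (aR ^ 2 - σ.im ^ 2) * Complex.abs σ * Complex.abs (σ - A) *
        (Cc * Real.exp (Real.pi * |σ.im|)) := by
        gcongr
    _ = Real.exp (aR ^ 2) * Cc * Complex.abs σ * Complex.abs (σ - A) *
        Real.exp (Real.pi * |σ.im| - σ.im ^ 2) := by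
        rw [show aR ^ 2 - σ.im ^ 2 = aR ^ 2 + -(σ.im ^ 2) by ring, Real.exp_add,
          show Real.pi * |σ.im| - σ.im ^ 2 = Real.pi * |σ.im| + -(σ.im ^ 2) by ring,
          Real.exp_add]
        ring
end
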